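/- arXiv:2006.13710 — 15 statements merged into one kernel-verified Lean document; each statement's English description precedes it below -/
import Mathlib

section
/- Let R be a G-graded commutative ring such that for every σ in the support of the grading there exists u_σ ∈ R_σ with R_σ = R_e u_σ and Ann_{R_e}(u_σ) = {0} (where e is the identity of G). Then every polynomial in R_e[x] that is a regular element (non-zero-divisor) of R_e[x] is also a regular element of R[x]. -/
/-!
Suppose `p * h = 0` in `R[X]`. Taking the `σ`-component of every coefficient is right linear over
`R_e`, so the `σ`-component `p_σ` of `p` still satisfies `p_σ * h = 0`. Its coefficients lie in
`R_σ = R_e u_σ`, hence `p_σ = q * u_σ` with `q ∈ R_e[X]`; then `(q * h) * u_σ = 0`, and since `u_σ`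
has no annihilator in `R_e` we get `q * h = 0`, so `q = 0` by regularity of `h` in `R_e[X]`.
Thus every component of `p` vanishes and `p = 0`.
-/

open Polynomial

namespace Polynomial

section Semiring

variable {R R' : Type*} [Semiring R] [Semiring R']

noncomputable def mapRange (f : R →+ R') (p : R[X]) : R'[X] :=
  ⟨⟨p.toFinsupp.coeff.mapRange f f.map_zero⟩⟩

@[simp]
theorem coeff_mapRange (f : R →+ R') (p : R[X]) (n : ℕ) :
    (p.mapRange f).coeff n = f (p.coeff n) := by
  simp [mapRange, coeff]

@[simp]
theorem mapRange_zero (f : R →+ R') : (0 : R[X]).mapRange f = 0 := by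
  ext
  simp

theorem mapRange_mul_of_map_mul_coeff (f : R →+ R) (p : R[X]) {h : R[X]}
    (hf : ∀ a i, f (a * h.coeff i) = f a * h.coeff i) :
    (p * h).mapRange f = p.mapRange f * h := by
  ext n
  simp [coeff_mul, hf]

variable (S : Subsemiring R)

theorem coeff_mul_mem_of_coeff_mem {p q : R[X]} (hp : ∀ i, p.coeff i ∈ S)
    (hq : ∀ i, q.coeff i ∈ S) (n : ℕ) : (p * q).coeff n ∈ S := by
  rw [coeff_mul]
  exact sum_mem fun x _ => mul_mem (hp x.1) (hq x.2)

theorem exists_eq_mul_C_of_coeff_mem {u : R} {p : R[X]}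
    (hp : ∀ i, ∃ r ∈ S, p.coeff i = r * u) :
    ∃ q : R[X], (∀ i, q.coeff i ∈ S) ∧ p = q * C u := by
  choose r hrS hr using hp
  refine ⟨∑ i ∈ p.support, monomial i (r i), fun i => ?_, ?_⟩
  · simp only [finsetSum_coeff, coeff_monomial, Finset.sum_ite_eq']
    split_ifs
    exacts [hrS i, S.zero_mem]
  · ext i
    simp only [coeff_mul_C, finsetSum_coeff, coeff_monomial, Finset.sum_ite_eq']
    split_ifs with hi
    · exact hr i
    · rw [notMem_support_iff.mp hi, zero_mul]

end Semiring

variable {R : Type*} [CommSemiring R] (S : Subsemiring R)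

theorem eq_zero_of_mul_eq_zero_of_coeff_mem_mul {u : R} (hu : ∀ r ∈ S, r * u = 0 → r = 0)
    {h : R[X]} (hcoeff : ∀ i, h.coeff i ∈ S)
    (hreg : ∀ q : R[X], (∀ i, q.coeff i ∈ S) → q * h = 0 → q = 0) {p : R[X]}
    (hp : ∀ i, ∃ r ∈ S, p.coeff i = r * u) (hph : p * h = 0) : p = 0 := by
  obtain ⟨q, hqS, rfl⟩ := exists_eq_mul_C_of_coeff_mem S hp
  have hqh : q * h = 0 := by
    ext n
    refine hu _ (coeff_mul_mem_of_coeff_mem S hqS hcoeff n) ?_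
    rw [← coeff_mul_C, mul_right_comm, hph, coeff_zero]
  rw [hreg q hqS hqh, zero_mul]

end Polynomial

section GradedRing

open DirectSum

variable {ι R σ : Type*} [DecidableEq ι] [AddMonoid ι] [Semiring R] [SetLike σ R]
  [AddSubmonoidClass σ R] (𝒜 : ι → σ) [GradedRing 𝒜]

theorem GradedRing.proj_mem (i : ι) (r : R) : GradedRing.proj 𝒜 i r ∈ 𝒜 i := by
  rw [GradedRing.proj_apply]
  exact (decompose 𝒜 r i).2

theorem GradedRing.proj_mul_of_mem_zero (i : ι) (a : R) {b : R} (hb : b ∈ 𝒜 0) :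
    GradedRing.proj 𝒜 i (a * b) = GradedRing.proj 𝒜 i a * b := by
  simp only [GradedRing.proj_apply, coe_decompose_mul_of_right_mem_zero 𝒜 hb]

theorem GradedRing.eq_zero_of_forall_proj_eq_zero {r : R} (hr : ∀ i, GradedRing.proj 𝒜 i r = 0) :
    r = 0 := by
  apply (decompose 𝒜).injective
  rw [decompose_zero]
  exact DFinsupp.ext fun i => Subtype.ext ((GradedRing.proj_apply 𝒜 i r).symm.trans (hr i))

end GradedRing

/-- If for every `σ` in the support of the grading there is `u_σ ∈ R_σ` with
`R_σ = R_e u_σ` and `Ann_{R_e}(u_σ) = 0`, then every polynomial in `R_e[x]` that is regular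
(as an element of `R_e[x]`, i.e. killed by no nonzero polynomial with coefficients in `R_e`)
is regular in `R[x]`. (Here `e = 0` is the identity of the additively written group `G`.) -/
theorem stmt_1 {G R : Type*} [AddGroup G] [DecidableEq G] [CommRing R]
    (𝒜 : G → AddSubgroup R) [GradedRing 𝒜]
    (hu : ∀ σ : G, 𝒜 σ ≠ ⊥ → ∃ u ∈ 𝒜 σ,
      (∀ a ∈ 𝒜 σ, ∃ r ∈ 𝒜 (0 : G), a = r * u) ∧
      (∀ r ∈ 𝒜 (0 : G), r * u = 0 → r = 0))
    (h : R[X]) (hcoeff : ∀ i, h.coeff i ∈ 𝒜 (0 : G))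
    (hreg : ∀ p : R[X], (∀ i, p.coeff i ∈ 𝒜 (0 : G)) → p * h = 0 → p = 0) :
    h ∈ nonZeroDivisors R[X] := by
  rw [mem_nonZeroDivisors_iff_right]
  intro p hph
  have hcomponent : ∀ σ, p.mapRange (GradedRing.proj 𝒜 σ) = 0 := by
    intro σ
    have hmem i : (p.mapRange (GradedRing.proj 𝒜 σ)).coeff i ∈ 𝒜 σ := by
      rw [coeff_mapRange]
      exact GradedRing.proj_mem 𝒜 σ _
    by_cases hbot : 𝒜 σ = ⊥
    · ext i
      simpa [hbot] using hmem i
    obtain ⟨u, -, hgen, hann⟩ := hu σ hbot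
    refine eq_zero_of_mul_eq_zero_of_coeff_mem_mul (SetLike.GradeZero.subsemiring 𝒜) hann hcoeff
      hreg (fun i => hgen _ (hmem i)) ?_
    rw [← mapRange_mul_of_map_mul_coeff _ _
      fun a i => GradedRing.proj_mul_of_mem_zero 𝒜 σ a (hcoeff i), hph, mapRange_zero]
  ext n
  exact GradedRing.eq_zero_of_forall_proj_eq_zero 𝒜 fun σ => by
    simpa using congrArg (coeff · n) (hcomponent σ)
end

section
/- Let R be a commutative ring and f ∈ R[x] a polynomial whose content ideal C(f) is principal, generated by a ∈ R. Then there exists g ∈ R[x] with content C(g) = R (i.e., the coefficients of g generate the unit ideal) such that f(x) = a·g(x). -/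
open Polynomial

/-- If the content ideal of `f ∈ R[x]` is principal, generated by `a`, then
there is `g ∈ R[x]` with unit content ideal such that `f = a · g`. -/
theorem stmt_2 {R : Type*} [CommRing R] (f : R[X]) (a : R)
    (h : Ideal.span (Set.range f.coeff) = Ideal.span {a}) :
    ∃ g : R[X], Ideal.span (Set.range g.coeff) = ⊤ ∧ f = C a * g := by
  classical
  have hmem : ∀ n, f.coeff n ∈ Ideal.span ({a} : Set R) := fun n =>
    h ▸ Ideal.subset_span ⟨n, rfl⟩
  choose b hb using fun n => Ideal.mem_span_singleton'.mp (hmem n)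
  set b2 : ℕ → R := fun n => if f.coeff n = 0 then 0 else b n with hb2def
  have hab2 : ∀ n, a * b2 n = f.coeff n := by
    intro n
    by_cases hn : f.coeff n = 0
    · simp [hb2def, hn]
    · simp only [hb2def, hn, if_false]
      rw [mul_comm]; exact hb n
  set g0 : R[X] := ∑ n ∈ f.support, C (b2 n) * X ^ n with hg0
  have hg0c : ∀ n, g0.coeff n = b2 n := by
    intro n
    rw [hg0, finset_sum_coeff]
    simp only [coeff_C_mul, coeff_X_pow, mul_ite, mul_one, mul_zero]
    rw [Finset.sum_ite_eq f.support n b2]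
    by_cases hn : n ∈ f.support
    · simp [hn]
    · simp only [hn, if_false, hb2def]
      rw [mem_support_iff, not_not] at hn
      simp [hn]
  set I : Ideal R := Ideal.span (Set.range b2) with hI
  have haI : a ∈ Ideal.span ({a} : Set R) * I := by
    have hle : Ideal.span (Set.range f.coeff) ≤ Ideal.span ({a} : Set R) * I := by
      rw [Ideal.span_le]
      rintro _ ⟨n, rfl⟩
      rw [← hab2 n]
      exact Ideal.mul_mem_mul (Ideal.subset_span rfl) (Ideal.subset_span ⟨n, rfl⟩)
    exact hle (h ▸ Ideal.mem_span_singleton_self a)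
  obtain ⟨s, hsI, hsa⟩ := Ideal.mem_span_singleton_mul.mp haI
  set N := f.natDegree + 1 with hN
  have hfN : f.coeff N = 0 := coeff_eq_zero_of_natDegree_lt (by omega)
  refine ⟨g0 + C (1 - s) * X ^ N, ?_, ?_⟩
  · rw [Ideal.eq_top_iff_one]
    have hcoeff : ∀ n, (g0 + C (1 - s) * X ^ N).coeff n = if n = N then 1 - s else b2 n := by
      intro n
      rw [coeff_add, hg0c, coeff_C_mul, coeff_X_pow]
      by_cases hn : n = N
      · subst hn
        simp [hb2def, hfN]
      · simp [hn, Ne.symm hn]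
    have hsmem : s ∈ Ideal.span (Set.range (g0 + C (1 - s) * X ^ N).coeff) := by
      refine Ideal.span_le.mpr ?_ hsI
      rintro _ ⟨n, rfl⟩
      by_cases hn : n = N
      · subst hn
        simp only [hb2def, hfN, if_pos rfl]
        exact Ideal.zero_mem _
      · refine Ideal.subset_span ⟨n, ?_⟩
        rw [hcoeff n, if_neg hn]
    have h1s : (1 : R) - s ∈ Ideal.span (Set.range (g0 + C (1 - s) * X ^ N).coeff) := by
      refine Ideal.subset_span ⟨N, ?_⟩
      rw [hcoeff N, if_pos rfl]
    have := Ideal.add_mem _ hsmem h1s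
    simpa using this
  · ext n
    simp only [coeff_C_mul, coeff_add, coeff_X_pow, hg0c, mul_add, hab2]
    by_cases hn : n = N
    · subst hn
      simp [hfN, mul_sub, hsa]
    · simp [hn]
end

section
/- Let R be a G-graded commutative ring such that R_e is an EM-ring and for every σ in the support of the grading there exists u_σ ∈ R_σ with R_σ = R_e u_σ and Ann_{R_e}(u_σ) = {0}. Then R is an EM-G-graded ring. -/
/- Write a nonzero homogeneous `f` of degree `σ` as `u_σ f₀` with `f₀ ∈ R_e[x]`. If `f₀` is a zero
divisor of `R_e[x]`, the EM property of `R_e` factors it further, so in all cases `f = c g` with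
`g ∈ R_e[x]` regular in `R_e[x]`. Such a `g` stays regular in `R[x]`: if `p g = 0` with `p ≠ 0`,
some homogeneous component `p_τ = u_τ q` of `p` is nonzero, `q ∈ R_e[x]`, and `p_τ g = 0` because
`g` has degree `0`; as `u_τ` has no annihilator in `R_e`, this forces `q g = 0`, so `q = 0`.
Finally `c` is a zero divisor since `f = c g` is one and `g` is regular. -/

open Polynomial

/-- `R` (with grading `𝒜`) is an EM-`G`-graded ring: every nonzero homogeneous
zero-divisor polynomial in `R[x]` has an annihilating content. -/
def IsEMGGraded {G R : Type*} [CommRing R] (𝒜 : G → AddSubgroup R) : Prop :=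
  ∀ f : R[X], f ≠ 0 → (∃ σ : G, ∀ i, f.coeff i ∈ 𝒜 σ) → f ∉ nonZeroDivisors R[X] →
    ∃ (c : R) (g : R[X]), c ∉ nonZeroDivisors R ∧ g ∈ nonZeroDivisors R[X] ∧ f = C c * g

/-- The subring of `R` whose carrier is the set `A` is an EM-ring: identifying `A[x]` with
the polynomials over `R` all of whose coefficients lie in `A`, every polynomial over `A`
that is a zero divisor in `A[x]` factors as `c·g` with `c` a zero divisor of `A` and `g`
regular in `A[x]`. -/
def IsEMSubring {R : Type*} [CommRing R] (A : Set R) : Prop :=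
  ∀ f : R[X], (∀ i, f.coeff i ∈ A) →
    (∃ p : R[X], p ≠ 0 ∧ (∀ i, p.coeff i ∈ A) ∧ p * f = 0) →
    ∃ (c : R) (g : R[X]), c ∈ A ∧ (∀ i, g.coeff i ∈ A) ∧
      (∃ d ∈ A, d ≠ 0 ∧ c * d = 0) ∧
      (∀ p : R[X], (∀ i, p.coeff i ∈ A) → p * g = 0 → p = 0) ∧
      f = C c * g

open DirectSum
open scoped nonZeroDivisors

theorem Polynomial.coeff_sum_monomial_support {R : Type*} [Semiring R] (p : R[X]) (t : ℕ → R)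
    (n : ℕ) : (∑ m ∈ p.support, monomial m (t m)).coeff n = if n ∈ p.support then t n else 0 := by
  simp only [finsetSum_coeff, coeff_monomial, Finset.sum_ite_eq']

theorem Polynomial.ne_bot_of_coeff_mem {R : Type*} [Ring R] {H : AddSubgroup R} {f : R[X]}
    (hf : f ≠ 0) (hH : ∀ n, f.coeff n ∈ H) : H ≠ ⊥ := by
  rintro rfl
  exact hf (Polynomial.ext fun n => by simpa using hH n)

section FreeGenerator

variable {ι R σ : Type*} [Zero ι] [CommSemiring R] [SetLike σ R]

def IsFreeGeneratorOfGrade (𝒜 : ι → σ) (τ : ι) (u : R) : Prop :=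
  u ∈ 𝒜 τ ∧ (∀ a ∈ 𝒜 τ, ∃ r ∈ 𝒜 0, a = r * u) ∧ (∀ r ∈ 𝒜 0, r * u = 0 → r = 0)

namespace IsFreeGeneratorOfGrade

variable {𝒜 : ι → σ} {τ : ι} {u : R}

theorem exists_eq_C_mul [AddSubmonoidClass σ R] (hu : IsFreeGeneratorOfGrade 𝒜 τ u) {p : R[X]}
    (hp : ∀ n, p.coeff n ∈ 𝒜 τ) : ∃ q : R[X], (∀ n, q.coeff n ∈ 𝒜 0) ∧ p = C u * q := by
  choose r hr hru using fun n => hu.2.1 (p.coeff n) (hp n)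
  refine ⟨∑ m ∈ p.support, monomial m (r m), fun n => ?_, Polynomial.ext fun n => ?_⟩
  · rw [coeff_sum_monomial_support]
    split_ifs
    exacts [hr n, zero_mem _]
  · rw [coeff_C_mul, coeff_sum_monomial_support]
    split_ifs with hn
    · rw [mul_comm, ← hru]
    · rw [mul_zero, notMem_support_iff.1 hn]

theorem eq_zero_of_C_mul_eq_zero (hu : IsFreeGeneratorOfGrade 𝒜 τ u) {q : R[X]}
    (hq : ∀ n, q.coeff n ∈ 𝒜 0) (h : C u * q = 0) : q = 0 :=
  Polynomial.ext fun n => hu.2.2 _ (hq n) (by rw [mul_comm, ← coeff_C_mul, h, coeff_zero])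

end IsFreeGeneratorOfGrade

end FreeGenerator

section Graded

variable {ι R σ : Type*} [AddMonoid ι] [Semiring R] [SetLike σ R] [AddSubmonoidClass σ R]
  (𝒜 : ι → σ)

theorem Polynomial.coeff_mul_mem_graded [SetLike.GradedMonoid 𝒜] {i j : ι} {p q : R[X]}
    (hp : ∀ n, p.coeff n ∈ 𝒜 i) (hq : ∀ n, q.coeff n ∈ 𝒜 j) (n : ℕ) :
    (p * q).coeff n ∈ 𝒜 (i + j) := by
  rw [coeff_mul]
  exact sum_mem fun x _ => SetLike.mul_mem_graded (hp x.1) (hq x.2)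

variable [DecidableEq ι] [GradedRing 𝒜]

noncomputable def Polynomial.coeffComponent (p : R[X]) (τ : ι) : R[X] :=
  ∑ m ∈ p.support, monomial m (decompose 𝒜 (p.coeff m) τ : R)

theorem Polynomial.coeff_coeffComponent (p : R[X]) (τ : ι) (n : ℕ) :
    (p.coeffComponent 𝒜 τ).coeff n = decompose 𝒜 (p.coeff n) τ := by
  rw [coeffComponent, coeff_sum_monomial_support]
  split_ifs with hn
  · rfl
  · rw [notMem_support_iff.1 hn, decompose_zero, DirectSum.zero_apply, ZeroMemClass.coe_zero]

theorem Polynomial.coeff_coeffComponent_mem (p : R[X]) (τ : ι) (n : ℕ) :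
    (p.coeffComponent 𝒜 τ).coeff n ∈ 𝒜 τ := by
  rw [coeff_coeffComponent]
  exact SetLike.coe_mem _

theorem Polynomial.coeffComponent_zero (τ : ι) : (0 : R[X]).coeffComponent 𝒜 τ = 0 :=
  Polynomial.ext fun n => by simp [coeff_coeffComponent]

theorem Polynomial.eq_zero_of_forall_coeffComponent_eq_zero {p : R[X]}
    (h : ∀ τ, p.coeffComponent 𝒜 τ = 0) : p = 0 := by
  classical
  ext n
  rw [coeff_zero, ← sum_support_decompose 𝒜 (p.coeff n)]
  refine Finset.sum_eq_zero fun τ _ => ?_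
  rw [← coeff_coeffComponent, h, coeff_zero]

theorem Polynomial.coeffComponent_mul_of_coeff_mem_zero (p : R[X]) {g : R[X]}
    (hg : ∀ n, g.coeff n ∈ 𝒜 0) (τ : ι) :
    (p * g).coeffComponent 𝒜 τ = p.coeffComponent 𝒜 τ * g := by
  ext n
  simp only [coeff_coeffComponent, coeff_mul, ← GradedRing.proj_apply, map_sum]
  refine Finset.sum_congr rfl fun x _ => ?_
  simp only [GradedRing.proj_apply]
  exact coe_decompose_mul_of_right_mem_zero 𝒜 (hg x.2)

end Graded

theorem Polynomial.mem_nonZeroDivisors_of_grade_zero {ι R : Type*}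
    [DecidableEq ι] [AddMonoid ι] [CommRing R] (𝒜 : ι → AddSubgroup R) [GradedRing 𝒜]
    (hu : ∀ τ, 𝒜 τ ≠ ⊥ → ∃ u, IsFreeGeneratorOfGrade 𝒜 τ u) {g : R[X]}
    (hg : ∀ n, g.coeff n ∈ 𝒜 0)
    (hreg : ∀ p : R[X], (∀ n, p.coeff n ∈ 𝒜 0) → p * g = 0 → p = 0) : g ∈ R[X]⁰ := by
  refine mem_nonZeroDivisors_iff_right.2 fun p hpg =>
    eq_zero_of_forall_coeffComponent_eq_zero 𝒜 fun τ => ?_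
  by_contra hne
  obtain ⟨u, hu⟩ := hu τ (ne_bot_of_coeff_mem hne (coeff_coeffComponent_mem 𝒜 p τ))
  obtain ⟨q, hq, hpq⟩ := hu.exists_eq_C_mul (coeff_coeffComponent_mem 𝒜 p τ)
  have hqg : q * g = 0 := by
    refine hu.eq_zero_of_C_mul_eq_zero (by simpa using coeff_mul_mem_graded 𝒜 hq hg) ?_
    rw [← mul_assoc, ← hpq, ← coeffComponent_mul_of_coeff_mem_zero 𝒜 p hg, hpg,
      coeffComponent_zero]
  exact hne (by rw [hpq, hreg q hq hqg, mul_zero])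

/-- If `R_e` is an EM-ring and for every `σ` in the support there is
`u_σ ∈ R_σ` with `R_σ = R_e u_σ` and `Ann_{R_e}(u_σ) = 0`, then `R` is EM-`G`-graded. -/
theorem stmt_4 {G R : Type*} [AddGroup G] [DecidableEq G] [CommRing R]
    (𝒜 : G → AddSubgroup R) [GradedRing 𝒜]
    (hEM : IsEMSubring ((𝒜 (0 : G) : Set R)))
    (hu : ∀ σ : G, 𝒜 σ ≠ ⊥ → ∃ u ∈ 𝒜 σ,
      (∀ a ∈ 𝒜 σ, ∃ r ∈ 𝒜 (0 : G), a = r * u) ∧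
      (∀ r ∈ 𝒜 (0 : G), r * u = 0 → r = 0)) :
    IsEMGGraded 𝒜 := by
  rintro f hf ⟨σ, hfσ⟩ hfz
  obtain ⟨u, huσ⟩ : ∃ u, IsFreeGeneratorOfGrade 𝒜 σ u := hu σ (ne_bot_of_coeff_mem hf hfσ)
  obtain ⟨f₀, hf₀, rfl⟩ := huσ.exists_eq_C_mul hfσ
  obtain ⟨c, g, hg, hreg, hfg⟩ : ∃ (c : R) (g : R[X]), (∀ n, g.coeff n ∈ 𝒜 0) ∧
      (∀ p : R[X], (∀ n, p.coeff n ∈ 𝒜 0) → p * g = 0 → p = 0) ∧ C u * f₀ = C c * g := by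
    by_cases hf₀z : ∃ p : R[X], p ≠ 0 ∧ (∀ n, p.coeff n ∈ 𝒜 0) ∧ p * f₀ = 0
    · obtain ⟨c, g, -, hg, -, hreg, rfl⟩ := hEM f₀ hf₀ hf₀z
      exact ⟨u * c, g, hg, hreg, by rw [C_mul, mul_assoc]⟩
    · exact ⟨u, f₀, hf₀, fun p hp hpf => by_contra fun hp0 => hf₀z ⟨p, hp0, hp, hpf⟩, rfl⟩
  have hg₀ : g ∈ R[X]⁰ := mem_nonZeroDivisors_of_grade_zero 𝒜 hu hg hreg
  refine ⟨c, g, fun hc => hfz ?_, hg₀, hfg⟩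
  rw [hfg, mul_mem_nonZeroDivisors]
  exact ⟨mem_nonzeroDivisors_of_coeff_mem 0 (by rwa [coeff_C_zero]), hg₀⟩
end

section
/- The ring R = Z_4[Y]/(Y^2), with its Z_2-grading given by R_0 = Z_4 and R_1 = Z_4·Y, is an EM-Z_2-graded ring; that is, every nonzero homogeneous zero-divisor polynomial in R[x] has an annihilating content. -/
/-!
A homogeneous coefficient is `a` or `b ε` with `a, b ∈ ℤ₄`, and an element of `ℤ₄[ε]` whose
`ℤ₄`-part is odd is a unit. So a zero-divisor of degree `0` has all coefficients in `2ℤ₄` and is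
`2 g`, while one of degree `1` is `ε g`, or `2ε g` when all its coefficients lie in
`2ℤ₄ ε`. In each case the cofactor `g` has a coefficient with odd `ℤ₄`-part (over a nonzero
coefficient of `f`), hence is regular by McCoy's theorem.
-/

open Polynomial TrivSqZeroExt DualNumber
open scoped nonZeroDivisors

def HasAnnihilatingContent {R : Type*} [CommRing R] (f : R[X]) : Prop :=
  ∃ (c : R) (g : R[X]), c ∉ R⁰ ∧ g ∈ R[X]⁰ ∧ f = C c * g

theorem hasAnnihilatingContent_of_forall_dvd_coeff {R : Type*} [CommRing R] {f : R[X]} {c : R}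
    (hc : c ∉ R⁰) (hdvd : ∀ i, c ∣ f.coeff i) (j : ℕ) (hj : ∀ r, f.coeff j = c * r → r ∈ R⁰) :
    HasAnnihilatingContent f := by
  obtain ⟨g, rfl⟩ := (C_dvd_iff_dvd_coeff c f).2 hdvd
  exact ⟨c, g, hc, mem_nonzeroDivisors_of_coeff_mem j (hj _ (coeff_C_mul g)), rfl⟩

local notation "𝔻" => DualNumber (ZMod 4)

namespace DualNumber

theorem exists_eq_two_mul_of_two_mul_eq_zero {a : ZMod 4} (ha : 2 * a = 0) : ∃ b, a = 2 * b := by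
  revert a
  decide

theorem isUnit_of_two_mul_fst_ne_zero {x : 𝔻} (hx : 2 * x.fst ≠ 0) : IsUnit x := by
  have hsq : ∀ a : ZMod 4, 2 * a ≠ 0 → a * a = 1 := by decide
  exact isUnit_iff_isUnit_fst.2 (.of_mul_eq_one _ (hsq _ hx))

theorem two_mul_fst_coeff_eq_zero {f : 𝔻[X]} (hf : f ∉ 𝔻[X]⁰) (i : ℕ) :
    2 * (f.coeff i).fst = 0 := by
  by_contra h
  exact hf (mem_nonzeroDivisors_of_coeff_mem i (isUnit_of_two_mul_fst_ne_zero h).mem_nonZeroDivisors)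

theorem eps_ne_zero : (ε : 𝔻) ≠ 0 :=
  fun h => absurd (congrArg snd h) (by decide)

theorem inl_two_notMem_nonZeroDivisors : (inl 2 : 𝔻) ∉ 𝔻⁰ := by
  refine notMem_nonZeroDivisors_iff_left.2 ⟨inl 2, ?_, fun h => absurd (congrArg fst h) (by decide)⟩
  rw [inl_mul_inl]
  exact congrArg inl (by decide)

theorem eps_notMem_nonZeroDivisors : (ε : 𝔻) ∉ 𝔻⁰ :=
  notMem_nonZeroDivisors_iff_left.2 ⟨ε, eps_mul_eps, eps_ne_zero⟩

theorem inr_two_notMem_nonZeroDivisors : (inr 2 : 𝔻) ∉ 𝔻⁰ :=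
  notMem_nonZeroDivisors_iff_left.2 ⟨ε, inr_mul_inr _ _ _, eps_ne_zero⟩

theorem hasAnnihilatingContent_of_snd_coeff_eq_zero {f : 𝔻[X]} (hf0 : f ≠ 0) (hf : f ∉ 𝔻[X]⁰)
    (hsnd : ∀ i, (f.coeff i).snd = 0) : HasAnnihilatingContent f := by
  refine hasAnnihilatingContent_of_forall_dvd_coeff inl_two_notMem_nonZeroDivisors (fun i => ?_)
    f.natDegree fun r hr => (isUnit_of_two_mul_fst_ne_zero ?_).mem_nonZeroDivisors
  · obtain ⟨b, hb⟩ := exists_eq_two_mul_of_two_mul_eq_zero (two_mul_fst_coeff_eq_zero hf i)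
    exact ⟨inl b, by ext <;> simp [hb, hsnd]⟩
  · have hlead : (f.coeff f.natDegree).fst ≠ 0 := fun h =>
      leadingCoeff_ne_zero.2 hf0 (TrivSqZeroExt.ext h (hsnd _))
    simpa [hr] using hlead

theorem hasAnnihilatingContent_of_fst_coeff_eq_zero {f : 𝔻[X]} (hf0 : f ≠ 0)
    (hfst : ∀ i, (f.coeff i).fst = 0) : HasAnnihilatingContent f := by
  by_cases hodd : ∃ j, 2 * (f.coeff j).snd ≠ 0
  · obtain ⟨j, hj⟩ := hodd
    refine hasAnnihilatingContent_of_forall_dvd_coeff eps_notMem_nonZeroDivisors (fun i => ?_)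
      j fun r hr => (isUnit_of_two_mul_fst_ne_zero ?_).mem_nonZeroDivisors
    · exact ⟨inl (f.coeff i).snd, by ext <;> simp [hfst]⟩
    · simpa [hr] using hj
  · push Not at hodd
    refine hasAnnihilatingContent_of_forall_dvd_coeff inr_two_notMem_nonZeroDivisors (fun i => ?_)
      f.natDegree fun r hr => (isUnit_of_two_mul_fst_ne_zero ?_).mem_nonZeroDivisors
    · obtain ⟨b, hb⟩ := exists_eq_two_mul_of_two_mul_eq_zero (hodd i)
      exact ⟨inl b, by ext <;> simp [hb, hfst]⟩
    · have hlead : (f.coeff f.natDegree).snd ≠ 0 := fun h =>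
        leadingCoeff_ne_zero.2 hf0 (TrivSqZeroExt.ext (hfst _) h)
      simpa [hr] using hlead

end DualNumber

/-- The ring `R = Z₄[Y]/(Y²)` (realized as the dual numbers over `ZMod 4`),
with its `Z₂`-grading `R₀ = Z₄` (elements `a + 0·Y`) and `R₁ = Z₄·Y` (elements `0 + b·Y`),
is an EM-`Z₂`-graded ring: every nonzero homogeneous zero-divisor polynomial in `R[x]`
has an annihilating content. -/
theorem stmt_5 :
    ∀ f : Polynomial (DualNumber (ZMod 4)), f ≠ 0 →
      ((∀ i, (f.coeff i).snd = 0) ∨ (∀ i, (f.coeff i).fst = 0)) →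
      f ∉ nonZeroDivisors (Polynomial (DualNumber (ZMod 4))) →
      ∃ (c : DualNumber (ZMod 4)) (g : Polynomial (DualNumber (ZMod 4))),
        c ∉ nonZeroDivisors (DualNumber (ZMod 4)) ∧
        g ∈ nonZeroDivisors (Polynomial (DualNumber (ZMod 4))) ∧
        f = C c * g := by
  intro f hf0 hhom hf
  rcases hhom with hsnd | hfst
  · exact hasAnnihilatingContent_of_snd_coeff_eq_zero hf0 hf hsnd
  · exact hasAnnihilatingContent_of_fst_coeff_eq_zero hf0 hfst
end

section
/- Let R be an EM-ring and n ≥ 2 an integer. Then the ring H = R[y]/(y^n), with its Z_n-grading given by H_k = R·y^k for k ∈ Z_n, is an EM-Z_n-graded ring. -/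
/-!
A homogeneous polynomial of degree `k` in `H[x]`, `H = R[y]/(yⁿ)`, is `f = yᵏ · F̄` for some
`F ∈ R[x]`, where `F̄` is the image of `F` under `R → H`. Regularity passes from `F` to `F̄`:
by McCoy's theorem a zero divisor `F̄` is killed by a constant `P̄ ≠ 0`, and any coefficient
`P_d ≠ 0` with `d < n` then kills `F`. So if `F` is regular, `k ≠ 0` (as `f` is a zero
divisor) and `yᵏ`, killed by `yⁿ⁻ᵏ`, is the annihilating content. Otherwise `F = b · G` with
`b` a zero divisor and `G` regular, since `R` is EM, and `f = (b yᵏ) · Ḡ`.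
-/

open Polynomial
open scoped nonZeroDivisors

/-- A commutative ring `S` is an EM-ring if every zero-divisor polynomial in `S[x]`
has an annihilating content. -/
def IsEMRing (S : Type*) [CommRing S] : Prop :=
  ∀ f : S[X], f ∉ nonZeroDivisors S[X] →
    ∃ (c : S) (g : S[X]), c ∉ nonZeroDivisors S ∧ g ∈ nonZeroDivisors S[X] ∧ f = C c * g

theorem Polynomial.exists_eq_C_mul_map_of_coeff_eq {R S : Type*} [Semiring R] [Semiring S]
    (φ : R →+* S) (c : S) {f : S[X]} (h : ∀ i, ∃ a, f.coeff i = c * φ a) :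
    ∃ F : R[X], f = C c * F.map φ := by
  choose a ha using h
  refine ⟨∑ i ∈ f.support, monomial i (a i), ?_⟩
  ext i
  simp only [coeff_C_mul, coeff_map, finsetSum_coeff, coeff_monomial, Finset.sum_ite_eq',
    apply_ite φ, map_zero]
  split_ifs with hi
  · exact ha i
  · rw [notMem_support_iff.mp hi, mul_zero]

section QuotientSpanXPow

variable {R : Type*} [CommRing R] {n : ℕ}

theorem mk_span_X_pow_eq_zero_iff {P : R[X]} :
    Ideal.Quotient.mk (Ideal.span {(X : R[X]) ^ n}) P = 0 ↔ ∀ d < n, P.coeff d = 0 := by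
  rw [Ideal.Quotient.eq_zero_iff_mem, Ideal.mem_span_singleton, X_pow_dvd_iff]

theorem ne_zero_of_nontrivial_quotient_span_X_pow (n : ℕ)
    [Nontrivial (R[X] ⧸ Ideal.span {(X : R[X]) ^ n})] : n ≠ 0 := by
  rintro rfl
  exact not_subsingleton (R[X] ⧸ Ideal.span {(X : R[X]) ^ 0})
    (Ideal.Quotient.subsingleton_iff.mpr (by simp))

theorem mk_span_X_pow_C_mul_X_pow_eq_zero_iff {k : ℕ} (hk : k < n) {a : R} :
    Ideal.Quotient.mk (Ideal.span {(X : R[X]) ^ n}) (C a * X ^ k) = 0 ↔ a = 0 := by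
  refine ⟨fun h => ?_, fun h => by simp [h]⟩
  simpa using mk_span_X_pow_eq_zero_iff.mp h k hk

theorem mk_span_X_pow_comp_C_injective (hn : n ≠ 0) :
    Function.Injective ((Ideal.Quotient.mk (Ideal.span {(X : R[X]) ^ n})).comp C) := by
  refine (injective_iff_map_eq_zero _).mpr fun a ha => ?_
  exact (mk_span_X_pow_C_mul_X_pow_eq_zero_iff (Nat.pos_of_ne_zero hn)).mp (by simpa using ha)

theorem mk_span_X_pow_X_pow_notMem_nonZeroDivisors [Nontrivial R] {k : ℕ} (hk0 : k ≠ 0)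
    (hk : k < n) :
    Ideal.Quotient.mk (Ideal.span {(X : R[X]) ^ n}) (X ^ k) ∉
      (R[X] ⧸ Ideal.span {(X : R[X]) ^ n})⁰ := by
  intro h
  have hmul : Ideal.Quotient.mk (Ideal.span {(X : R[X]) ^ n}) (X ^ (n - k)) *
      Ideal.Quotient.mk _ (X ^ k) = 0 := by
    rw [← map_mul, ← pow_add, Nat.sub_add_cancel hk.le, Ideal.Quotient.eq_zero_iff_mem]
    exact Ideal.mem_span_singleton_self _
  have hne : Ideal.Quotient.mk (Ideal.span {(X : R[X]) ^ n}) (X ^ (n - k)) ≠ 0 := by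
    simpa using (mk_span_X_pow_C_mul_X_pow_eq_zero_iff (a := (1 : R))
      (by omega : n - k < n)).not.mpr one_ne_zero
  exact hne (mem_nonZeroDivisors_iff_right.mp h _ hmul)

theorem map_mk_span_X_pow_comp_C_mem_nonZeroDivisors {G : R[X]} (hG : G ∈ R[X]⁰) :
    G.map ((Ideal.Quotient.mk (Ideal.span {(X : R[X]) ^ n})).comp C) ∈
      (R[X] ⧸ Ideal.span {(X : R[X]) ^ n})[X]⁰ := by
  refine Polynomial.mem_nonZeroDivisors_iff.mpr fun h hh => ?_
  obtain ⟨P, rfl⟩ := Ideal.Quotient.mk_surjective h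
  by_contra hP
  obtain ⟨d, hd, hPd⟩ : ∃ d < n, P.coeff d ≠ 0 := by
    simpa using mt mk_span_X_pow_eq_zero_iff.mpr hP
  refine hPd (Polynomial.mem_nonZeroDivisors_iff.mp hG _ (Polynomial.ext fun i => ?_))
  have hi : Ideal.Quotient.mk (Ideal.span {(X : R[X]) ^ n}) (P * C (G.coeff i)) = 0 := by
    simpa [smul_eq_mul] using congr(coeff $hh i)
  simpa [coeff_mul_C] using mk_span_X_pow_eq_zero_iff.mp hi d hd

end QuotientSpanXPow

theorem stmt_6_general {R : Type*} [CommRing R] (hR : IsEMRing R) (n : ℕ) :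
    ∀ f : Polynomial (R[X] ⧸ Ideal.span {(X : R[X]) ^ n}), f ≠ 0 →
      (∃ k : ZMod n, ∀ i, ∃ a : R,
        f.coeff i = Ideal.Quotient.mk (Ideal.span {(X : R[X]) ^ n}) (C a * X ^ k.val)) →
      f ∉ nonZeroDivisors (Polynomial (R[X] ⧸ Ideal.span {(X : R[X]) ^ n})) →
      ∃ (c : R[X] ⧸ Ideal.span {(X : R[X]) ^ n})
        (g : Polynomial (R[X] ⧸ Ideal.span {(X : R[X]) ^ n})),
        c ∉ nonZeroDivisors (R[X] ⧸ Ideal.span {(X : R[X]) ^ n}) ∧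
        g ∈ nonZeroDivisors (Polynomial (R[X] ⧸ Ideal.span {(X : R[X]) ^ n})) ∧
        f = C c * g := by
  intro f hf0 ⟨k, hk⟩ hfzd
  set π := Ideal.Quotient.mk (Ideal.span {(X : R[X]) ^ n})
  have : Nontrivial (R[X] ⧸ Ideal.span {(X : R[X]) ^ n}) :=
    nontrivial_iff.mp (nontrivial_of_ne f 0 hf0)
  have : Nontrivial R :=
    nontrivial_iff.mp (Ideal.Quotient.mk_surjective (I := Ideal.span {(X : R[X]) ^ n})).nontrivial
  have hn := ne_zero_of_nontrivial_quotient_span_X_pow (R := R) n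
  have : NeZero n := ⟨hn⟩
  obtain ⟨F, rfl⟩ := exists_eq_C_mul_map_of_coeff_eq (π.comp C) (π (X ^ k.val)) fun i =>
    (hk i).imp fun a ha => by rw [ha, map_mul, mul_comm]; rfl
  by_cases hF : F ∈ R[X]⁰
  · have hk0 : k.val ≠ 0 := fun h0 => hfzd (by
      simpa [h0] using map_mk_span_X_pow_comp_C_mem_nonZeroDivisors hF)
    exact ⟨_, _, mk_span_X_pow_X_pow_notMem_nonZeroDivisors hk0 (ZMod.val_lt k),
      map_mk_span_X_pow_comp_C_mem_nonZeroDivisors hF, rfl⟩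
  · obtain ⟨b, G, hb, hG, rfl⟩ := hR F hF
    refine ⟨π (C b) * π (X ^ k.val), _, fun hc => hb ?_,
      map_mk_span_X_pow_comp_C_mem_nonZeroDivisors hG, ?_⟩
    · exact mem_nonZeroDivisors_of_injective (mk_span_X_pow_comp_C_injective hn)
        (mul_mem_nonZeroDivisors.mp hc).1
    · simp only [Polynomial.map_mul, map_C, C_mul, RingHom.coe_comp, Function.comp_apply]
      ring

/-- If `R` is an EM-ring and `n ≥ 2`, then `H = R[y]/(yⁿ)` with its
`Z_n`-grading `H_k = R·yᵏ` is an EM-`Z_n`-graded ring: every nonzero homogeneous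
zero-divisor polynomial in `H[x]` has an annihilating content. -/
theorem stmt_6 {R : Type*} [CommRing R] (hR : IsEMRing R) (n : ℕ) (hn : 2 ≤ n) :
    ∀ f : Polynomial (R[X] ⧸ Ideal.span {(X : R[X]) ^ n}), f ≠ 0 →
      (∃ k : ZMod n, ∀ i, ∃ a : R,
        f.coeff i = Ideal.Quotient.mk (Ideal.span {(X : R[X]) ^ n}) (C a * X ^ k.val)) →
      f ∉ nonZeroDivisors (Polynomial (R[X] ⧸ Ideal.span {(X : R[X]) ^ n})) →
      ∃ (c : R[X] ⧸ Ideal.span {(X : R[X]) ^ n})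
        (g : Polynomial (R[X] ⧸ Ideal.span {(X : R[X]) ^ n})),
        c ∉ nonZeroDivisors (R[X] ⧸ Ideal.span {(X : R[X]) ^ n}) ∧
        g ∈ nonZeroDivisors (Polynomial (R[X] ⧸ Ideal.span {(X : R[X]) ^ n})) ∧
        f = C c * g :=
  stmt_6_general hR n
end

section
/- Let R be an EM-ring and G a group. Then the group ring R[G], with its natural G-grading (R[G])_σ = R·σ, is an EM-G-graded ring. -/
open Polynomial

/-!
A homogeneous polynomial `f` over `R[G]` of degree `σ` is `single σ 1 * p` for a polynomial `p`
over `R` viewed in `R[G][X]`, and `single σ 1` is a unit. Regularity passes from `R[X]` to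
`R[G][X]` because multiplication by a polynomial over `R` acts separately on each `τ`-component
`R[X]` of `R[G][X] = ⊕_τ R[X]·τ`. So `f` is a zero-divisor iff `p` is, and a factorization
`p = c * g` from the EM-property of `R` lifts to `f = single σ c * g`.
-/

namespace MonoidAlgebra

open nonZeroDivisors

variable {R G : Type*}

section Semiring

variable [Semiring R] [Monoid G]

noncomputable def polynomialCoeff (τ : G) (h : (MonoidAlgebra R G)[X]) : R[X] :=
  ⟨.ofCoeff (Finsupp.mapRange (fun x : MonoidAlgebra R G => x.coeff τ) rfl h.toFinsupp.coeff)⟩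

@[simp]
lemma coeff_polynomialCoeff (τ : G) (h : (MonoidAlgebra R G)[X]) (n : ℕ) :
    (polynomialCoeff τ h).coeff n = (h.coeff n).coeff τ := by
  rcases h with ⟨h⟩
  rfl

lemma polynomial_ext {h₁ h₂ : (MonoidAlgebra R G)[X]}
    (H : ∀ τ : G, polynomialCoeff τ h₁ = polynomialCoeff τ h₂) : h₁ = h₂ := by
  ext n τ
  simpa using congr_arg (fun q : R[X] => q.coeff n) (H τ)

@[simp]
lemma polynomialCoeff_zero (τ : G) : polynomialCoeff τ (0 : (MonoidAlgebra R G)[X]) = 0 := by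
  ext n
  simp

lemma polynomialCoeff_mul_map_singleOneRingHom (τ : G) (h : (MonoidAlgebra R G)[X]) (p : R[X]) :
    polynomialCoeff τ (h * p.map singleOneRingHom) = polynomialCoeff τ h * p := by
  ext n
  rw [coeff_polynomialCoeff, Polynomial.coeff_mul, Polynomial.coeff_mul, coeff_sum,
    Finsupp.finsetSum_apply]
  refine Finset.sum_congr rfl fun ij _ => ?_
  simp [coeff_mul_single_one]

lemma eq_C_single_mul_map_of_coeff_eq_single {f : (MonoidAlgebra R G)[X]} {σ : G}
    (hf : ∀ i, ∃ a : R, f.coeff i = single σ a) :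
    f = C (single σ 1) * (polynomialCoeff σ f).map singleOneRingHom := by
  ext n : 1
  obtain ⟨a, ha⟩ := hf n
  simp [ha]

end Semiring

section CommSemiring

variable [CommSemiring R]

lemma map_singleOneRingHom_mem_nonZeroDivisors [CommMonoid G] {p : R[X]} (hp : p ∈ R[X]⁰) :
    p.map (singleOneRingHom (M := G)) ∈ (MonoidAlgebra R G)[X]⁰ := by
  refine mem_nonZeroDivisors_iff_right.mpr fun h hh => polynomial_ext fun τ => ?_
  have hτ := congr_arg (polynomialCoeff τ) hh
  rw [polynomialCoeff_mul_map_singleOneRingHom] at hτ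
  simpa using mem_nonZeroDivisors_iff_right.mp hp _ (by simpa using hτ)

lemma mem_nonZeroDivisors_of_single_mem_nonZeroDivisors [CommMonoid G] {σ : G} {c : R}
    (hc : single σ c ∈ (MonoidAlgebra R G)⁰) : c ∈ R⁰ := by
  refine mem_nonZeroDivisors_iff_right.mpr fun x hx => ?_
  have h1 : single 1 x * single σ c = 0 := by simp [hx]
  simpa using congr_arg (coeff · 1) (mem_nonZeroDivisors_iff_right.mp hc _ h1)

end CommSemiring

end MonoidAlgebra

open MonoidAlgebra nonZeroDivisors in
/-- If `R` is an EM-ring and `G` a (commutative) group, then the group ring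
`R[G]` with its natural `G`-grading `(R[G])_σ = R·σ` is an EM-`G`-graded ring: every
nonzero zero-divisor polynomial over `R[G]` all of whose coefficients lie in a single
component `R·σ` has an annihilating content. -/
theorem stmt_7 {R : Type*} [CommRing R] (G : Type*) [CommGroup G] (hR : IsEMRing R) :
    ∀ f : Polynomial (MonoidAlgebra R G), f ≠ 0 →
      (∃ σ : G, ∀ i, ∃ a : R, f.coeff i = MonoidAlgebra.single σ a) →
      f ∉ nonZeroDivisors (Polynomial (MonoidAlgebra R G)) →
      ∃ (c : MonoidAlgebra R G) (g : Polynomial (MonoidAlgebra R G)),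
        c ∉ nonZeroDivisors (MonoidAlgebra R G) ∧
        g ∈ nonZeroDivisors (Polynomial (MonoidAlgebra R G)) ∧
        f = C c * g := by
  rintro f - ⟨σ, hσ⟩ hf
  have hfp := eq_C_single_mul_map_of_coeff_eq_single hσ
  have hunit : IsUnit (C (single σ (1 : R))) := by
    simpa using ((Group.isUnit σ).map (of R G)).map C
  have hp : polynomialCoeff σ f ∉ R[X]⁰ := fun hp => hf <| hfp ▸ mul_mem_nonZeroDivisors.mpr
    ⟨hunit.mem_nonZeroDivisors, map_singleOneRingHom_mem_nonZeroDivisors hp⟩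
  obtain ⟨c, g, hc, hg, hpg⟩ := hR _ hp
  refine ⟨single σ c, g.map singleOneRingHom,
    fun h => hc (mem_nonZeroDivisors_of_single_mem_nonZeroDivisors h),
    map_singleOneRingHom_mem_nonZeroDivisors hg, ?_⟩
  rw [hfp, hpg, Polynomial.map_mul, map_C, ← mul_assoc, ← C_mul]
  simp
end

section
/- Let R be a G-graded commutative ring that is a crossed product over its support (i.e., every nonzero component R_σ contains a unit of R), and suppose R_e is an EM-ring. Then R is an EM-G-graded ring. -/
open Polynomial

/-!
Multiplying by a homogeneous unit moves any homogeneous polynomial into `R_e[x]` without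
changing whether it is a zero divisor. By McCoy's theorem a zero-divisor polynomial is killed
by a nonzero scalar; when the polynomial lies in `R_e[x]` every homogeneous component of that
scalar kills it too, and a homogeneous unit moves a nonzero component into `R_e`. Hence
zero divisors of `R[x]` lying in `R_e[x]` are zero divisors of `R_e[x]`, which is what is
needed to transport the EM factorization from `R_e` to `R`.
-/

lemma Polynomial.coeff_C_mem {R S : Type*} [Semiring R] [SetLike S R] [AddSubmonoidClass S R]
    {A : S} {s : R} (hs : s ∈ A) (i : ℕ) : (C s).coeff i ∈ A := by
  rw [coeff_C]
  split_ifs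
  exacts [hs, zero_mem A]

lemma DirectSum.decompose_smul_eq_zero {ι R S : Type*} [DecidableEq ι] [AddMonoid ι]
    [CommSemiring R] [SetLike S R] [AddSubmonoidClass S R] (𝒜 : ι → S) [GradedRing 𝒜]
    {r : R} {q : R[X]} (hq : ∀ n, q.coeff n ∈ 𝒜 0) (hrq : r • q = 0) (i : ι) :
    (decompose 𝒜 r i : R) • q = 0 := by
  ext n
  have hrqn : r * q.coeff n = 0 := by simpa using congrArg (coeff · n) hrq
  simp [← coe_decompose_mul_of_right_mem_zero 𝒜 (hq n), hrqn]

open scoped nonZeroDivisors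

section CrossedProduct

variable {G R : Type*} [AddGroup G] [DecidableEq G] [CommRing R]
  (𝒜 : G → AddSubgroup R) [GradedRing 𝒜]

def IsCrossedProduct : Prop :=
  ∀ σ : G, 𝒜 σ ≠ ⊥ → ∃ u ∈ 𝒜 σ, IsUnit u

variable {𝒜}

lemma Units.inv_mem_neg_of_mem {σ : G} {u : Rˣ} (hu : (u : R) ∈ 𝒜 σ) :
    ((u⁻¹ : Rˣ) : R) ∈ 𝒜 (-σ) := by
  have hinv : (u : R) * DirectSum.decompose 𝒜 ((u⁻¹ : Rˣ) : R) (-σ) = 1 := by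
    rw [← DirectSum.coe_decompose_mul_add_of_left_mem 𝒜 hu, Units.mul_inv, add_neg_cancel,
      DirectSum.decompose_of_mem_same 𝒜 SetLike.GradedOne.one_mem]
  rw [Units.inv_eq_of_mul_eq_one_right hinv]
  exact SetLike.coe_mem _

lemma IsCrossedProduct.exists_unit_mul_mem_zero (h𝒜 : IsCrossedProduct 𝒜) (σ : G) :
    ∃ u : Rˣ, ∀ x ∈ 𝒜 σ, (u : R) * x ∈ 𝒜 0 := by
  by_cases hσ : 𝒜 σ = ⊥
  · refine ⟨1, fun x hx => ?_⟩
    rw [hσ, AddSubgroup.mem_bot] at hx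
    simp [hx, zero_mem]
  · obtain ⟨w, hw, hwunit⟩ := h𝒜 σ hσ
    refine ⟨hwunit.unit⁻¹, fun x hx => ?_⟩
    simpa using SetLike.mul_mem_graded (Units.inv_mem_neg_of_mem (u := hwunit.unit) hw) hx

lemma IsCrossedProduct.exists_mem_zero_smul_eq_zero (h𝒜 : IsCrossedProduct 𝒜) {q : R[X]}
    (hq : ∀ n, q.coeff n ∈ 𝒜 0) (hzd : q ∉ R[X]⁰) :
    ∃ s ∈ 𝒜 0, s ≠ 0 ∧ s • q = 0 := by
  obtain ⟨r, hr, hrq⟩ := Polynomial.notMem_nonZeroDivisors_iff.mp hzd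
  obtain ⟨τ, hτ⟩ : ∃ τ, (DirectSum.decompose 𝒜 r τ : R) ≠ 0 := by
    classical
    by_contra! h
    rw [← DirectSum.sum_support_decompose 𝒜 r] at hr
    exact hr (Finset.sum_eq_zero fun i _ => h i)
  obtain ⟨u, hu⟩ := h𝒜.exists_unit_mul_mem_zero τ
  refine ⟨u * DirectSum.decompose 𝒜 r τ, hu _ (SetLike.coe_mem _), ?_, ?_⟩
  · rwa [Ne, Units.mul_right_eq_zero]
  · rw [mul_smul, DirectSum.decompose_smul_eq_zero 𝒜 hq hrq, smul_zero]

end CrossedProduct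

/-- If `(R,G)` is a crossed product over its support (each nonzero component
contains a unit of `R`) and `R_e` is an EM-ring, then `R` is an EM-`G`-graded ring. -/
theorem stmt_8 {G R : Type*} [AddGroup G] [DecidableEq G] [CommRing R]
    (𝒜 : G → AddSubgroup R) [GradedRing 𝒜]
    (hcross : ∀ σ : G, 𝒜 σ ≠ ⊥ → ∃ u ∈ 𝒜 σ, IsUnit u)
    (hEM : IsEMSubring ((𝒜 (0 : G) : Set R))) :
    IsEMGGraded 𝒜 := by
  have h𝒜 : IsCrossedProduct 𝒜 := hcross
  intro f _ ⟨σ, hfσ⟩ hf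
  obtain ⟨u, hu⟩ := h𝒜.exists_unit_mul_mem_zero σ
  set F := C (u : R) * f with hF
  have hF0 : ∀ i, F.coeff i ∈ 𝒜 0 := fun i => by simpa [F] using hu _ (hfσ i)
  have hFzd : F ∉ R[X]⁰ := by
    rwa [mul_mem_nonZeroDivisors, and_iff_right (u.isUnit.map C).mem_nonZeroDivisors]
  obtain ⟨s, hs0, hs, hsF⟩ := h𝒜.exists_mem_zero_smul_eq_zero hF0 hFzd
  obtain ⟨c, g, -, hg0, ⟨d, -, hd, hcd⟩, hgreg, hFcg⟩ :=
    hEM F hF0 ⟨C s, C_ne_zero.mpr hs, coeff_C_mem hs0, by rwa [← smul_eq_C_mul]⟩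
  refine ⟨(u⁻¹ : Rˣ) * c, g, ?_, ?_, ?_⟩
  · rw [mul_mem_nonZeroDivisors]
    exact fun h => hd (mem_nonZeroDivisors_iff_left.mp h.2 d hcd)
  · by_contra hg
    obtain ⟨t, ht0, ht, htg⟩ := h𝒜.exists_mem_zero_smul_eq_zero hg0 hg
    exact C_ne_zero.mpr ht (hgreg _ (coeff_C_mem ht0) (by rwa [← smul_eq_C_mul]))
  · rw [C_mul, mul_assoc, ← hFcg, hF, ← mul_assoc, ← C_mul, Units.inv_mul, C_1, one_mul]
end

section
/- Let R be a commutative ring with two gradings (R,G) and (R,G') that are almost equivalent, meaning there is a ring automorphism φ of R such that for each τ ∈ G' there exists σ ∈ G with φ(R_σ) = R'_τ. If R is an EM-G-graded ring with respect to the first grading, then R is an EM-G'-graded ring with respect to the second. -/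
open Polynomial

theorem MulEquivClass.map_mem_nonZeroDivisors_iff {M₀ M₀' F : Type*} [MonoidWithZero M₀]
    [MonoidWithZero M₀'] [EquivLike F M₀ M₀'] [MulEquivClass F M₀ M₀'] (e : F) {a : M₀} :
    e a ∈ nonZeroDivisors M₀' ↔ a ∈ nonZeroDivisors M₀ := by
  rw [← MulEquivClass.map_nonZeroDivisors e]
  exact Submonoid.mem_map_iff_mem (EquivLike.injective e)

theorem IsEMGGraded.of_ringEquiv {G G' R S : Type*} [CommRing R] [CommRing S]
    {𝒜 : G → AddSubgroup R} {ℬ : G' → AddSubgroup S} (e : R ≃+* S)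
    (h𝒜ℬ : ∀ τ : G', ∃ σ : G, ∀ x ∈ ℬ τ, e.symm x ∈ 𝒜 σ) (hEM : IsEMGGraded 𝒜) :
    IsEMGGraded ℬ := by
  let ψ : R[X] ≃+* S[X] := mapEquiv e
  intro f hf0 ⟨τ, hτ⟩ hfz
  obtain ⟨f, rfl⟩ := ψ.surjective f
  obtain ⟨σ, hσ⟩ := h𝒜ℬ τ
  have hf_hom : ∀ i, f.coeff i ∈ 𝒜 σ := fun i ↦ by
    simpa [ψ] using hσ _ (hτ i)
  have hf_zd : f ∉ nonZeroDivisors R[X] := by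
    rwa [MulEquivClass.map_mem_nonZeroDivisors_iff] at hfz
  obtain ⟨c, g, hc, hg, rfl⟩ := hEM f (by simpa using hf0) ⟨σ, hf_hom⟩ hf_zd
  refine ⟨e c, ψ g, by rwa [MulEquivClass.map_mem_nonZeroDivisors_iff],
    by rwa [MulEquivClass.map_mem_nonZeroDivisors_iff], ?_⟩
  simp [ψ, Polynomial.map_mul]

theorem stmt_10_general {G G' R : Type*}
    [CommRing R]
    (𝒜 : G → AddSubgroup R)
    (ℬ : G' → AddSubgroup R)
    (φ : R ≃+* R)
    (hφ : ∀ τ : G', ∃ σ : G, ∀ x : R, x ∈ ℬ τ ↔ ∃ y ∈ 𝒜 σ, φ y = x)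
    (hEM : IsEMGGraded 𝒜) :
    IsEMGGraded ℬ := by
  refine hEM.of_ringEquiv φ fun τ ↦ ?_
  obtain ⟨σ, hσ⟩ := hφ τ
  refine ⟨σ, fun x hx ↦ ?_⟩
  obtain ⟨y, hy, rfl⟩ := (hσ x).mp hx
  simpa using hy

/-- If two gradings `(R,G)` and `(R,G')` are almost equivalent — there is a
ring automorphism `φ` of `R` such that each component of the second grading is the image
under `φ` of some component of the first — and `R` is EM-`G`-graded for the first grading,
then `R` is EM-`G'`-graded for the second. -/
theorem stmt_10 {G G' R : Type*} [AddGroup G] [AddGroup G'] [DecidableEq G] [DecidableEq G']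
    [CommRing R]
    (𝒜 : G → AddSubgroup R) [GradedRing 𝒜]
    (ℬ : G' → AddSubgroup R) [GradedRing ℬ]
    (φ : R ≃+* R)
    (hφ : ∀ τ : G', ∃ σ : G, ∀ x : R, x ∈ ℬ τ ↔ ∃ y ∈ 𝒜 σ, φ y = x)
    (hEM : IsEMGGraded 𝒜) :
    IsEMGGraded ℬ :=
  stmt_10_general 𝒜 ℬ φ hφ hEM
end

section
/- Every Bezout-G-graded commutative ring is an EM-G-graded ring; that is, if every finitely generated G-graded ideal of R is principal, then every nonzero homogeneous zero-divisor polynomial in R[x] has an annihilating content. -/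
/-!
The content ideal of `f` is finitely generated and, when all coefficients lie in one `𝒜 σ`,
homogeneous; so it is principal, `(a)`. Then `f = C a * g` and `a = a * t` with `t` in the content
ideal of `g`. Since `a * (1 - t) = 0`, padding `g` by `(1 - t) X ^ N` above its degree leaves
`C a * g` unchanged and puts `t + (1 - t) = 1` into the content ideal, so the padded polynomial is
regular by McCoy's theorem. Conversely a nonzero `r` with
`r • f = 0` kills the whole content ideal, in particular `a`, so `a` is a zero divisor.
-/

open Polynomial

namespace Polynomial

open Ideal nonZeroDivisors

section CommSemiring

variable {R : Type*} [CommSemiring R]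

theorem contentIdeal_le_iff {p : R[X]} {I : Ideal R} :
    p.contentIdeal ≤ I ↔ ∀ n, p.coeff n ∈ I := by
  refine ⟨fun h n ↦ h (p.coeff_mem_contentIdeal n), fun h ↦ span_le.mpr fun c hc ↦ ?_⟩
  obtain ⟨n, -, rfl⟩ := mem_coeffs_iff.mp hc
  exact h n

theorem smul_eq_zero_iff_mem_annihilator_contentIdeal {p : R[X]} {r : R} :
    r • p = 0 ↔ r ∈ p.contentIdeal.annihilator := by
  rw [contentIdeal_def, Submodule.mem_annihilator_span, Polynomial.ext_iff]
  simp only [coeff_smul, coeff_zero, smul_eq_mul, Subtype.forall]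
  refine ⟨fun h c hc ↦ ?_, fun h n ↦ ?_⟩
  · obtain ⟨n, -, rfl⟩ := mem_coeffs_iff.mp hc
    exact h n
  · by_cases hn : p.coeff n = 0
    · simp [hn]
    · exact h _ (coeff_mem_coeffs hn)

theorem mem_nonZeroDivisors_of_contentIdeal_eq_top {p : R[X]} (hp : p.contentIdeal = ⊤) :
    p ∈ R[X]⁰ := by
  refine Polynomial.mem_nonZeroDivisors_iff.mpr fun r hr ↦ ?_
  rw [smul_eq_zero_iff_mem_annihilator_contentIdeal, hp, Submodule.mem_annihilator] at hr
  simpa using hr 1 Submodule.mem_top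

theorem notMem_nonZeroDivisors_of_mem_contentIdeal {p : R[X]} (hp : p ∉ R[X]⁰) {a : R}
    (ha : a ∈ p.contentIdeal) : a ∉ R⁰ := by
  obtain ⟨r, hr0, hr⟩ := notMem_nonZeroDivisors_iff.mp hp
  rw [smul_eq_zero_iff_mem_annihilator_contentIdeal, Submodule.mem_annihilator] at hr
  exact fun h ↦ hr0 (h.2 r (by simpa [mul_comm] using hr a ha))

end CommSemiring

section CommRing

variable {R : Type*} [CommRing R]

theorem sup_span_singleton_le_contentIdeal_add_C_mul_X_pow {g : R[X]} {n : ℕ}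
    (hn : g.natDegree < n) (c : R) :
    g.contentIdeal ⊔ span {c} ≤ (g + C c * X ^ n).contentIdeal := by
  have hgn : g.coeff n = 0 := coeff_eq_zero_of_natDegree_lt hn
  refine sup_le (contentIdeal_le_iff.mpr fun i ↦ ?_) (span_singleton_le_iff_mem _ |>.mpr ?_)
  · by_cases hi : i = n
    · simp [hi, hgn]
    · have := (g + C c * X ^ n).coeff_mem_contentIdeal i
      rwa [coeff_add, coeff_C_mul_X_pow, if_neg hi, add_zero] at this
  · have := (g + C c * X ^ n).coeff_mem_contentIdeal n
    rwa [coeff_add, coeff_C_mul_X_pow, if_pos rfl, hgn, zero_add] at this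

theorem exists_mem_nonZeroDivisors_eq_C_mul_of_contentIdeal_eq_span {p : R[X]} {a : R}
    (h : p.contentIdeal = span {a}) : ∃ g ∈ R[X]⁰, p = C a * g := by
  obtain ⟨g, rfl⟩ : C a ∣ p := C_dvd_iff_dvd_coeff a p |>.mpr fun n ↦
    mem_span_singleton.mp (h ▸ p.coeff_mem_contentIdeal n)
  obtain ⟨t, ht, hat⟩ : ∃ t ∈ g.contentIdeal, a * t = a := by
    refine mem_span_singleton_mul.mp ?_
    simpa using contentIdeal_mul_le_mul_contentIdeal (C a) g (h ▸ mem_span_singleton_self a)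
  refine ⟨g + C (1 - t) * X ^ (g.natDegree + 1),
    mem_nonZeroDivisors_of_contentIdeal_eq_top ?_, ?_⟩
  · have := sup_span_singleton_le_contentIdeal_add_C_mul_X_pow (Nat.lt_succ_self _) _
      (Submodule.add_mem_sup ht (mem_span_singleton_self (1 - t)))
    rwa [add_sub_cancel, ← eq_top_iff_one] at this
  · rw [mul_add, ← mul_assoc, ← C_mul, mul_sub, hat, mul_one, sub_self, C_0, zero_mul, add_zero]

end CommRing

theorem isHomogeneous_contentIdeal {ι σ R : Type*} [Semiring R] [SetLike σ R]
    [AddSubmonoidClass σ R] [DecidableEq ι] [AddMonoid ι] (𝒜 : ι → σ) [GradedRing 𝒜]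
    {p : R[X]} {i : ι} (hp : ∀ n, p.coeff n ∈ 𝒜 i) : p.contentIdeal.IsHomogeneous 𝒜 :=
  homogeneous_span 𝒜 _ fun c hc ↦ by
    obtain ⟨n, -, rfl⟩ := mem_coeffs_iff.mp hc
    exact ⟨i, hp n⟩

end Polynomial

/-- Every Bezout-`G`-graded ring (every finitely generated `G`-graded ideal
is principal) is an EM-`G`-graded ring. -/
theorem stmt_11 {G R : Type*} [AddGroup G] [DecidableEq G] [CommRing R]
    (𝒜 : G → AddSubgroup R) [GradedRing 𝒜]
    (hBezout : ∀ I : Ideal R, I.FG → Ideal.IsHomogeneous 𝒜 I → ∃ a : R, I = Ideal.span {a}) :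
    IsEMGGraded 𝒜 := by
  rintro f - ⟨σ, hσ⟩ hf
  obtain ⟨a, ha⟩ := hBezout _ f.contentIdeal_FG (isHomogeneous_contentIdeal 𝒜 hσ)
  obtain ⟨g, hg, rfl⟩ := exists_mem_nonZeroDivisors_eq_C_mul_of_contentIdeal_eq_span ha
  have ha_mem : a ∈ (C a * g).contentIdeal := ha ▸ Ideal.mem_span_singleton_self a
  exact ⟨a, g, notMem_nonZeroDivisors_of_mem_contentIdeal hf ha_mem, hg, rfl⟩
end

section
/- Every EM-G-graded commutative ring is Armendariz-G-graded: if f(x) = Σ a_i x^i and g(x) = Σ b_j x^j are homogeneous polynomials in R[x] with f·g = 0, then a_i·b_j = 0 for all i, j. -/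
open Polynomial

/-! If `f = c·u` with `u` regular and `f·g = 0`, then cancelling `u` from `(c·g)·u = 0` gives
`c·g = 0`, so every `c·b_j` vanishes, and `a_i·b_j = u_i·(c·b_j) = 0`. -/

theorem Polynomial.coeff_C_mul_mul_coeff_eq_zero {R : Type*} [CommRing R] {c : R} {u g : R[X]}
    (hu : u ∈ nonZeroDivisors R[X]) (h : C c * u * g = 0) (i j : ℕ) :
    (C c * u).coeff i * g.coeff j = 0 := by
  have hcg : C c * g = 0 :=
    (mul_right_mem_nonZeroDivisors_eq_zero_iff hu).mp (by rw [← h]; ring)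
  have hcgj : c * g.coeff j = 0 := by simpa using congrArg (coeff · j) hcg
  rw [coeff_C_mul, mul_right_comm, hcgj, zero_mul]

theorem stmt_12_general {G R : Type*} [CommRing R]
    (𝒜 : G → AddSubgroup R) (hEM : IsEMGGraded 𝒜)
    (f g : R[X]) (hf : ∃ σ : G, ∀ i, f.coeff i ∈ 𝒜 σ)
    (hfg : f * g = 0) :
    ∀ i j, f.coeff i * g.coeff j = 0 := by
  intro i j
  by_cases hf0 : f = 0
  · simp [hf0]
  by_cases hg0 : g = 0
  · simp [hg0]
  obtain ⟨c, u, -, hu, rfl⟩ :=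
    hEM f hf0 hf (notMem_nonZeroDivisors_iff_left.mpr ⟨g, hfg, hg0⟩)
  exact coeff_C_mul_mul_coeff_eq_zero hu hfg i j

/-- Every EM-`G`-graded ring is Armendariz-`G`-graded: if `f, g` are
homogeneous polynomials with `f·g = 0`, then all products of their coefficients vanish. -/
theorem stmt_12 {G R : Type*} [AddGroup G] [DecidableEq G] [CommRing R]
    (𝒜 : G → AddSubgroup R) [GradedRing 𝒜] (hEM : IsEMGGraded 𝒜)
    (f g : R[X]) (hf : ∃ σ : G, ∀ i, f.coeff i ∈ 𝒜 σ)
    (hg : ∃ σ : G, ∀ i, g.coeff i ∈ 𝒜 σ)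
    (hfg : f * g = 0) :
    ∀ i j, f.coeff i * g.coeff j = 0 :=
  stmt_12_general 𝒜 hEM f g hf hfg
end

section
/- Let R be an EM-G-graded commutative ring and S ⊆ h(R) a multiplicatively closed subset of homogeneous elements. Then the localization S^{-1}R, with the induced G-grading (S^{-1}R)_λ = {a/s : s ∈ S, a homogeneous, λ = deg(s)^{-1}·deg(a)}, is an EM-G-graded ring. -/
open Polynomial

/-!
Let the coefficients of `f` be `aᵢ/sᵢ` of degree `λ`, and put `t = ∏ sᵢ`. Then `t · aᵢ/sᵢ` is the
image of `aᵢ ∏_{j ≠ i} sⱼ`, and whenever `aᵢ t ≠ 0` the identity `sᵢ (aᵢ ∏_{j ≠ i} sⱼ) = aᵢ t`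
forces this element to have degree `λ + deg t`. This gives a homogeneous `F ∈ R[X]` with
`F / 1 = t f`. As `(S⁻¹R)[X]` is a localization of `R[X]`, regular polynomials stay regular, so `F`
is a zero divisor; the EM property writes `F = c g` with `g` regular, whence `f = (c/t) (g/1)`
with `g/1` regular, and `c/t` is a zero divisor because `f` is.
-/

open scoped nonZeroDivisors

namespace Polynomial

theorem map_mem_nonZeroDivisors_of_isLocalization {R A : Type*} [CommSemiring R]
    [CommSemiring A] [Algebra R A] (S : Submonoid R) [IsLocalization S A] {p : R[X]}
    (hp : p ∈ R[X]⁰) : p.map (algebraMap R A) ∈ A[X]⁰ :=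
  letI := Polynomial.algebra R A
  haveI := Polynomial.isLocalization S A
  IsLocalization.nonZeroDivisors_le_comap (S.map C) A[X] hp

theorem C_mem_nonZeroDivisors {R : Type*} [CommRing R] {c : R} (hc : c ∈ R⁰) : C c ∈ R[X]⁰ :=
  mem_nonZeroDivisors_of_leadingCoeff (by rwa [leadingCoeff_C])

theorem exists_map_eq_of_coeff_mem {R A : Type*} [Semiring R] [Semiring A] (φ : R →+* A)
    (M : AddSubmonoid R) (f : A[X]) (h : ∀ i, ∃ c ∈ M, φ c = f.coeff i) :
    ∃ F : R[X], (∀ i, F.coeff i ∈ M) ∧ F.map φ = f := by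
  classical
  choose c hcM hc using h
  refine ⟨∑ i ∈ f.support, monomial i (c i), fun n => ?_, ?_⟩
  · rw [finsetSum_coeff]
    refine sum_mem fun i _ => ?_
    rw [coeff_monomial]
    split_ifs
    exacts [hcM i, zero_mem M]
  · ext n
    simp only [coeff_map, finsetSum_coeff, coeff_monomial, apply_ite φ, map_zero,
      Finset.sum_ite_eq', mem_support_iff, hc]
    split_ifs with h
    exacts [rfl, (not_not.mp h).symm]

end Polynomial

theorem mem_graded_neg_add_of_mul_mem {G R σ : Type*} [AddGroup G] [DecidableEq G] [Semiring R]
    [SetLike σ R] [AddSubmonoidClass σ R] (𝒜 : G → σ) [GradedRing 𝒜] {s x : R} {τ ν ρ : G}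
    (hs : s ∈ 𝒜 τ) (hx : x ∈ 𝒜 ν) (hsx : s * x ∈ 𝒜 ρ) (hsx0 : s * x ≠ 0) :
    x ∈ 𝒜 (-τ + ρ) := by
  have hdeg : τ + ν = ρ :=
    DirectSum.degree_eq_of_mem_mem 𝒜 (SetLike.mul_mem_graded hs hx) hsx hsx0
  rwa [← hdeg, neg_add_cancel_left]

section GradedLocalization

variable {G R : Type*} [AddGroup G] [DecidableEq G] [CommRing R] (𝒜 : G → AddSubgroup R)
  [GradedRing 𝒜] (S : Submonoid R)

theorem exists_mem_graded_algebraMap_eq_mul_mk {a e : R} {s t : S} {σ τ μ T : G}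
    (ha : a ∈ 𝒜 σ) (hs : (s : R) ∈ 𝒜 τ) (he : e ∈ 𝒜 μ) (ht : (t : R) ∈ 𝒜 T)
    (hset : (s : R) * e = t) :
    ∃ c ∈ 𝒜 (-τ + σ + T),
      algebraMap R (Localization S) c = algebraMap R _ t * Localization.mk a s := by
  have hmk : algebraMap R (Localization S) t * Localization.mk a s =
      Localization.mk (a * t) s := by
    rw [Localization.mk_eq_mk'_apply, Localization.mk_eq_mk'_apply,
      IsLocalization.mul_mk'_eq_mk'_of_mul, mul_comm]
  by_cases hat : a * t = 0
  · exact ⟨0, zero_mem _, by rw [hmk, hat, Localization.mk_zero, map_zero]⟩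
  have hset' : (s : R) * (a * e) = a * t := by rw [← hset]; ring
  refine ⟨a * e, ?_, ?_⟩
  · rw [add_assoc]
    exact mem_graded_neg_add_of_mul_mem 𝒜 hs (SetLike.mul_mem_graded ha he)
      (hset' ▸ SetLike.mul_mem_graded ha ht) (hset' ▸ hat)
  · rw [hmk, Localization.mk_eq_mk'_apply, eq_comm, IsLocalization.mk'_eq_iff_eq_mul,
      ← map_mul, ← hset]
    congr 1
    ring

theorem exists_homogeneous_map_eq_C_mul (hS : ∀ s ∈ S, ∃ σ : G, s ∈ 𝒜 σ)
    (f : (Localization S)[X]) {lam : G}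
    (hf : ∀ i, ∃ (a : R) (σ τ : G) (s : S),
      a ∈ 𝒜 σ ∧ (s : R) ∈ 𝒜 τ ∧ lam = -τ + σ ∧ f.coeff i = Localization.mk a s) :
    ∃ (t : S) (T : G) (F : R[X]), (∀ i, F.coeff i ∈ 𝒜 (lam + T)) ∧
      F.map (algebraMap R _) = C (algebraMap R _ t) * f := by
  classical
  choose a σ τ s ha hs hlam hf using hf
  let t : S := ∏ i ∈ f.support, s i
  obtain ⟨T, hT⟩ := hS t t.2
  refine ⟨t, T, exists_map_eq_of_coeff_mem _ (𝒜 (lam + T)).toAddSubmonoid _ fun i => ?_⟩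
  rw [coeff_C_mul]
  by_cases hi : i ∈ f.support
  · let e : S := ∏ j ∈ f.support.erase i, s j
    obtain ⟨μ, hμ⟩ := hS e e.2
    have hse : (s i : R) * e = t := by rw [← Submonoid.coe_mul, Finset.mul_prod_erase _ _ hi]
    rw [hf i, hlam i]
    exact exists_mem_graded_algebraMap_eq_mul_mk 𝒜 S (ha i) (hs i) hμ hT hse
  · exact ⟨0, zero_mem _, by rw [notMem_support_iff.mp hi, mul_zero, map_zero]⟩

end GradedLocalization

/-- If `R` is EM-`G`-graded and `S ⊆ h(R)` is a multiplicatively closed set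
of homogeneous elements, then `S⁻¹R` with the induced grading
`(S⁻¹R)_λ = {a/s : λ = deg(s)⁻¹ deg(a)}` is an EM-`G`-graded ring: every nonzero
homogeneous zero-divisor polynomial over `S⁻¹R` has an annihilating content. -/
theorem stmt_13 {G R : Type*} [AddGroup G] [DecidableEq G] [CommRing R]
    (𝒜 : G → AddSubgroup R) [GradedRing 𝒜] (hEM : IsEMGGraded 𝒜)
    (S : Submonoid R) (hS : ∀ s ∈ S, ∃ σ : G, s ∈ 𝒜 σ) :
    ∀ f : Polynomial (Localization S), f ≠ 0 →
      (∃ lam : G, ∀ i, ∃ (a : R) (σ τ : G) (s : S),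
        a ∈ 𝒜 σ ∧ (s : R) ∈ 𝒜 τ ∧ lam = -τ + σ ∧ f.coeff i = Localization.mk a s) →
      f ∉ nonZeroDivisors (Polynomial (Localization S)) →
      ∃ (c : Localization S) (g : Polynomial (Localization S)),
        c ∉ nonZeroDivisors (Localization S) ∧
        g ∈ nonZeroDivisors (Polynomial (Localization S)) ∧
        f = C c * g := by
  intro f hf0 ⟨lam, hf⟩ hfz
  obtain ⟨t, T, F, hFhom, hFf⟩ := exists_homogeneous_map_eq_C_mul 𝒜 S hS f hf
  obtain ⟨u, hu⟩ := IsLocalization.map_units (Localization S) t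
  have hF0 : F ≠ 0 := by
    rintro rfl
    apply hf0
    rwa [Polynomial.map_zero, eq_comm, ← hu, (isUnit_C.mpr u.isUnit).mul_right_eq_zero] at hFf
  have hFz : F ∉ R[X]⁰ := fun hF => hfz <| (mul_mem_nonZeroDivisors.mp
    (hFf ▸ map_mem_nonZeroDivisors_of_isLocalization (A := Localization S) S hF)).2
  obtain ⟨c, g, -, hg, rfl⟩ := hEM F hF0 ⟨lam + T, hFhom⟩ hFz
  have hgS := map_mem_nonZeroDivisors_of_isLocalization (A := Localization S) S hg
  have hf : f = C (↑u⁻¹ * algebraMap R (Localization S) c) * g.map (algebraMap R _) := by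
    rw [Polynomial.map_mul, map_C, ← hu] at hFf
    rw [C_mul, mul_assoc, hFf, ← mul_assoc, ← C_mul, u.inv_mul, C_1, one_mul]
  exact ⟨_, _, fun hc => hfz (hf ▸ mul_mem (C_mem_nonZeroDivisors hc) hgS), hgS, hf⟩
end

section
/- Let R be a G-graded commutative ring and let hT(R) = (hreg(R))^{-1}R be the localization at the set of regular homogeneous elements. If hT(R) is an EM-G-graded ring, then for every homogeneous zero-divisor polynomial f ∈ R[x] there exists c ∈ R such that Ann_{R[x]}(f) = Ann_{R[x]}(c). -/
open Polynomial

/-- The multiplicatively closed set of homogeneous regular elements of a graded ring. -/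
def hreg {G R : Type*} [AddGroup G] [DecidableEq G] [CommRing R]
    (𝒜 : G → AddSubgroup R) [GradedRing 𝒜] : Submonoid R where
  carrier := {r | r ∈ nonZeroDivisors R ∧ ∃ σ : G, r ∈ 𝒜 σ}
  one_mem' := ⟨one_mem _, 0, SetLike.one_mem_graded 𝒜⟩
  mul_mem' := fun ha hb =>
    ⟨mul_mem ha.1 hb.1, ha.2.choose + hb.2.choose,
      SetLike.mul_mem_graded ha.2.choose_spec hb.2.choose_spec⟩

/-!
Pass to `T = hT(R)`, into which `R` embeds because only regular elements are inverted.
The image of `f` in `T[X]` is still homogeneous and, by McCoy's theorem, still a zero divisor,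
so the EM hypothesis writes it as `C c * g` with `g` regular. Cancelling `g` gives
`Ann(f) = Ann(c)` in `T[X]`; writing `c = a / s` with `s` a unit of `T`, also `Ann(c) = Ann(a)`,
and both annihilators pull back to `R[X]` along the injection `R[X] → T[X]`.
-/

lemma hreg_le_nonZeroDivisors {G R : Type*} [AddGroup G] [DecidableEq G] [CommRing R]
    (𝒜 : G → AddSubgroup R) [GradedRing 𝒜] : hreg 𝒜 ≤ nonZeroDivisors R :=
  fun _ hr => hr.1

open scoped nonZeroDivisors

namespace Polynomial

variable {R S : Type*} [CommRing R] [CommRing S]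

lemma map_notMem_nonZeroDivisors {φ : R →+* S} (hφ : Function.Injective φ) {f : R[X]}
    (hf : f ∉ R[X]⁰) : f.map φ ∉ S[X]⁰ := by
  obtain ⟨a, ha, haf⟩ := notMem_nonZeroDivisors_iff.1 hf
  refine notMem_nonZeroDivisors_iff.2 ⟨φ a, (map_ne_zero_iff φ hφ).2 ha, ?_⟩
  rw [← Polynomial.map_smul, haf, Polynomial.map_zero]

lemma mul_eq_zero_iff_mul_C_eq_zero_of_eq_C_mul {f g : R[X]} {c : R} (hg : g ∈ R[X]⁰)
    (hfg : f = C c * g) (h : R[X]) : h * f = 0 ↔ h * C c = 0 := by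
  rw [hfg, ← mul_assoc]
  exact mul_right_mem_nonZeroDivisors_eq_zero_iff hg

lemma exists_forall_mul_eq_zero_iff_mul_C_eq_zero [Algebra R S] {M : Submonoid R}
    [IsLocalization M S] (hM : M ≤ R⁰) {f : R[X]} {c : S} {g : S[X]} (hg : g ∈ S[X]⁰)
    (hfg : f.map (algebraMap R S) = C c * g) :
    ∃ a : R, ∀ h : R[X], h * f = 0 ↔ h * C a = 0 := by
  obtain ⟨⟨a, s⟩, rfl⟩ := IsLocalization.mk'_surjective M c
  refine ⟨a, fun h => ?_⟩
  have hinj : Function.Injective (mapRingHom (algebraMap R S)) :=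
    map_injective _ (IsLocalization.injective S hM)
  have hs : IsUnit (C (algebraMap R S s)) := (IsLocalization.map_units S s).map C
  have hcs : C (IsLocalization.mk' S a s) * C (algebraMap R S s) = C (algebraMap R S a) := by
    rw [← C_mul, IsLocalization.mk'_spec]
  calc h * f = 0 ↔ h.map (algebraMap R S) * f.map (algebraMap R S) = 0 := by
        rw [← Polynomial.map_mul, ← coe_mapRingHom, map_eq_zero_iff _ hinj]
    _ ↔ h.map (algebraMap R S) * C (IsLocalization.mk' S a s) = 0 :=
        mul_eq_zero_iff_mul_C_eq_zero_of_eq_C_mul hg hfg _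
    _ ↔ h.map (algebraMap R S) * C (algebraMap R S a) = 0 := by
        rw [← hcs, ← mul_assoc, hs.mul_left_eq_zero]
    _ ↔ h * C a = 0 := by
        rw [← map_C, ← Polynomial.map_mul, ← coe_mapRingHom, map_eq_zero_iff _ hinj]

end Polynomial

/-- Let `hT(R) = (hreg R)⁻¹R`. If `hT(R)` (with its induced `G`-grading) is
an EM-`G`-graded ring, then for every homogeneous zero-divisor polynomial `f ∈ R[x]` there
exists `c ∈ R` with `Ann_{R[x]}(f) = Ann_{R[x]}(c)`. -/
theorem stmt_14 {G R : Type*} [AddGroup G] [DecidableEq G] [CommRing R]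
    (𝒜 : G → AddSubgroup R) [GradedRing 𝒜]
    (hEM : ∀ f : Polynomial (Localization (hreg 𝒜)), f ≠ 0 →
      (∃ lam : G, ∀ i, ∃ (a : R) (σ τ : G) (s : hreg 𝒜),
        a ∈ 𝒜 σ ∧ (s : R) ∈ 𝒜 τ ∧ lam = -τ + σ ∧ f.coeff i = Localization.mk a s) →
      f ∉ nonZeroDivisors (Polynomial (Localization (hreg 𝒜))) →
      ∃ (c : Localization (hreg 𝒜)) (g : Polynomial (Localization (hreg 𝒜))),
        c ∉ nonZeroDivisors (Localization (hreg 𝒜)) ∧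
        g ∈ nonZeroDivisors (Polynomial (Localization (hreg 𝒜))) ∧
        f = C c * g) :
    ∀ f : R[X], (∃ σ : G, ∀ i, f.coeff i ∈ 𝒜 σ) → f ∉ nonZeroDivisors R[X] →
      ∃ c : R, ∀ h : R[X], h * f = 0 ↔ h * C c = 0 := by
  rintro f ⟨σ, hσ⟩ hzd
  obtain rfl | hf0 := eq_or_ne f 0
  · exact ⟨0, fun h => by simp⟩
  have hinj := IsLocalization.injective (Localization (hreg 𝒜)) (hreg_le_nonZeroDivisors 𝒜)
  have hhom : ∀ i, ∃ (a : R) (σ' τ : G) (s : hreg 𝒜), a ∈ 𝒜 σ' ∧ (s : R) ∈ 𝒜 τ ∧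
      σ = -τ + σ' ∧ (f.map (algebraMap R _)).coeff i = Localization.mk a s := fun i =>
    ⟨f.coeff i, σ, 0, 1, hσ i, SetLike.one_mem_graded 𝒜, by simp,
      by rw [coeff_map, Localization.mk_one_eq_algebraMap]⟩
  obtain ⟨c, g, -, hg, hfg⟩ := hEM _ ((Polynomial.map_ne_zero_iff hinj).2 hf0) ⟨σ, hhom⟩
    (map_notMem_nonZeroDivisors hinj hzd)
  exact exists_forall_mul_eq_zero_iff_mul_C_eq_zero (hreg_le_nonZeroDivisors 𝒜) hg hfg
end

section
/- If R is an EM-G-graded commutative ring, then the polynomial ring R[x], with the grading (R[x])_σ = R_σ[x], is also an EM-G-graded ring. Consequently R[x_1, ..., x_k] is EM-G-graded for every k ≥ 1. -/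
open Polynomial

/-- The induced grading on `R[x]`: `(R[x])_σ = R_σ[x]`. -/
def polyGrading {G R : Type*} [CommRing R] (𝒜 : G → AddSubgroup R) (σ : G) :
    AddSubgroup R[X] where
  carrier := {p | ∀ i, p.coeff i ∈ 𝒜 σ}
  zero_mem' := fun i => by simpa using (𝒜 σ).zero_mem
  add_mem' := fun ha hb i => by simpa using add_mem (ha i) (hb i)
  neg_mem' := fun ha i => by simpa using neg_mem (ha i)

/-- The induced grading on `R[x₁,…,x_k]`: homogeneous of degree `σ` iff all coefficients
lie in `R_σ`. -/
def mvPolyGrading {G R : Type*} [CommRing R] (𝒜 : G → AddSubgroup R) (k : ℕ) (σ : G) :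
    AddSubgroup (MvPolynomial (Fin k) R) where
  carrier := {p | ∀ m, MvPolynomial.coeff m p ∈ 𝒜 σ}
  zero_mem' := fun m => by simpa using (𝒜 σ).zero_mem
  add_mem' := fun ha hb m => by simpa using add_mem (ha m) (hb m)
  neg_mem' := fun ha m => by simpa using neg_mem (ha m)

/-! Kronecker substitution `Y ↦ X ^ N` sends `F ∈ R[X][Y]` to `F(X, X^N) ∈ R[X]`, and for `N`
larger than every `X`-degree occurring in `F` it is injective, reading the coefficients of `F`
off consecutive blocks of length `N`. It preserves homogeneity and, by McCoy's theorem, turns a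
zero-divisor of `R[X][Y]` into one of `R[X]`. Factoring the image `c • g` in `R[X]` and cutting
`g` back into blocks of length `N` factors `F`. The case of `k` variables follows by induction
through `R[x₁,…,x_{k+1}] ≅ R[x₁,…,x_k][x]`. -/

open scoped nonZeroDivisors

lemma MulEquivClass.map_mem_nonZeroDivisors_iff_s16 {M N F : Type*} [MonoidWithZero M]
    [MonoidWithZero N] [EquivLike F M N] [MulEquivClass F M N] (e : F) {x : M} :
    e x ∈ N⁰ ↔ x ∈ M⁰ := by
  rw [← MulEquivClass.map_nonZeroDivisors e]
  exact ⟨fun ⟨y, hy, hyx⟩ => EquivLike.injective e hyx ▸ hy, fun hx => ⟨x, hx, rfl⟩⟩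

namespace Polynomial

variable {R : Type*} [CommRing R]

lemma mem_nonZeroDivisors_of_C_mem {c : R} (h : C c ∈ R[X]⁰) : c ∈ R⁰ :=
  mem_nonZeroDivisors_iff_right.2 fun x hx =>
    C_eq_zero.1 <| mem_nonZeroDivisors_iff_right.1 h (C x) (by rw [← C_mul, hx, C_0])

lemma mem_nonZeroDivisors_of_eval_mem {x : R} {f : R[X]} (h : f.eval x ∈ R⁰) : f ∈ R[X]⁰ :=
  Polynomial.mem_nonZeroDivisors_iff.2 fun a ha =>
    mem_nonZeroDivisors_iff_right.1 h a (by rw [← smul_eq_mul, ← eval_smul, ha, eval_zero])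

lemma coeff_eq_zero_of_mem_degreeLT {N n : ℕ} {p : R[X]} (hp : p ∈ degreeLT R N) (hn : N ≤ n) :
    p.coeff n = 0 :=
  coeff_eq_zero_of_degree_lt <| (mem_degreeLT.1 hp).trans_le (by exact_mod_cast hn)

lemma exists_forall_coeff_mem_degreeLT (F : R[X][X]) :
    ∃ N, 0 < N ∧ ∀ i, F.coeff i ∈ degreeLT R N := by
  refine ⟨(F.support.sup fun i => (F.coeff i).natDegree) + 1, Nat.succ_pos _, fun i => ?_⟩
  by_cases hi : i ∈ F.support
  · exact mem_degreeLT.2 <| degree_le_natDegree.trans_lt <|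
      by exact_mod_cast Nat.lt_succ_of_le (Finset.le_sup (f := fun i => (F.coeff i).natDegree) hi)
  · rw [notMem_support_iff.1 hi]
    exact zero_mem _

section Kronecker

variable {N : ℕ} {F : R[X][X]}

lemma coeff_eval_X_pow (hF : ∀ i, F.coeff i ∈ degreeLT R N) {i j : ℕ} (hj : j < N) :
    (F.eval (X ^ N)).coeff (N * i + j) = (F.coeff i).coeff j := by
  rw [eval_eq_sum_range, finsetSum_coeff, Finset.sum_eq_single i]
  · rw [← pow_mul, add_comm, coeff_mul_X_pow]
  · intro b _ hbi
    rw [← pow_mul, coeff_mul_X_pow']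
    split_ifs with hb
    · have hbi' : b < i := by
        have : N * b < N * (i + 1) := by rw [Nat.mul_succ]; omega
        exact lt_of_le_of_ne (Nat.lt_succ_iff.1 (Nat.lt_of_mul_lt_mul_left this)) hbi
      have : N * (b + 1) ≤ N * i := Nat.mul_le_mul_left N hbi'
      exact coeff_eq_zero_of_mem_degreeLT (hF b) (by rw [Nat.mul_succ] at this; omega)
    · rfl
  · intro hi
    rw [coeff_eq_zero_of_natDegree_lt (p := F) (by simpa [Nat.lt_succ_iff] using hi), zero_mul,
      coeff_zero]

lemma eq_of_eval_X_pow_eq {F' : R[X][X]} (hF : ∀ i, F.coeff i ∈ degreeLT R N)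
    (hF' : ∀ i, F'.coeff i ∈ degreeLT R N) (h : F.eval (X ^ N) = F'.eval (X ^ N)) : F = F' := by
  ext i j
  rcases lt_or_ge j N with hj | hj
  · rw [← coeff_eval_X_pow hF hj, ← coeff_eval_X_pow hF' hj, h]
  · rw [coeff_eq_zero_of_mem_degreeLT (hF i) hj, coeff_eq_zero_of_mem_degreeLT (hF' i) hj]

/-- Cuts `g` into blocks of length `N`; a right inverse of `F ↦ F.eval (X ^ N)`. -/
noncomputable def kroneckerUnpack (N : ℕ) (g : R[X]) : R[X][X] :=
  g.sum fun m a => monomial (m / N) (monomial (m % N) a)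

lemma eval_X_pow_kroneckerUnpack (N : ℕ) (g : R[X]) : (kroneckerUnpack N g).eval (X ^ N) = g := by
  conv_rhs => rw [← sum_monomial_eq g]
  rw [kroneckerUnpack, Polynomial.sum, eval_finsetSum]
  refine Finset.sum_congr rfl fun m _ => ?_
  rw [eval_monomial, ← pow_mul, monomial_mul_X_pow, Nat.mod_add_div]

lemma coeff_kroneckerUnpack_mem_degreeLT (hN : 0 < N) (g : R[X]) (i : ℕ) :
    (kroneckerUnpack N g).coeff i ∈ degreeLT R N := by
  rw [kroneckerUnpack, Polynomial.sum, finsetSum_coeff]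
  refine Submodule.sum_mem _ fun m _ => ?_
  rw [coeff_monomial]
  split_ifs
  · exact mem_degreeLT.2 <| (degree_monomial_le _ _).trans_lt <|
      by exact_mod_cast Nat.mod_lt m hN
  · exact zero_mem _

end Kronecker

end Polynomial

lemma isEMGGraded_polyGrading {G R : Type*} [CommRing R] {𝒜 : G → AddSubgroup R}
    (hEM : IsEMGGraded 𝒜) : IsEMGGraded (polyGrading 𝒜) := by
  rintro F hF0 ⟨σ, hσ⟩ hFzd
  obtain ⟨N, hN, hF⟩ := exists_forall_coeff_mem_degreeLT F
  have hf0 : F.eval (X ^ N) ≠ 0 := fun h =>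
    hF0 <| eq_of_eval_X_pow_eq hF (fun _ => zero_mem _) (by rw [h, eval_zero])
  have hfσ : ∀ m, (F.eval (X ^ N)).coeff m ∈ 𝒜 σ := fun m => by
    rw [← Nat.div_add_mod m N, coeff_eval_X_pow hF (Nat.mod_lt m hN)]
    exact hσ _ _
  obtain ⟨c, g, hc, hg, hfg⟩ :=
    hEM _ hf0 ⟨σ, hfσ⟩ fun h => hFzd (mem_nonZeroDivisors_of_eval_mem h)
  refine ⟨C c, kroneckerUnpack N g, fun h => hc (mem_nonZeroDivisors_of_C_mem h),
    mem_nonZeroDivisors_of_eval_mem (x := X ^ N) (by rwa [eval_X_pow_kroneckerUnpack]), ?_⟩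
  refine eq_of_eval_X_pow_eq hF (fun i => ?_) ?_
  · rw [coeff_C_mul, ← smul_eq_C_mul]
    exact Submodule.smul_mem _ c (coeff_kroneckerUnpack_mem_degreeLT hN g i)
  · rw [eval_mul, eval_C, eval_X_pow_kroneckerUnpack, hfg]

lemma IsEMGGraded.of_ringEquiv_s16 {G A B : Type*} [CommRing A] [CommRing B]
    {𝒜 : G → AddSubgroup A} {ℬ : G → AddSubgroup B} (e : B ≃+* A)
    (he : ∀ σ b, b ∈ ℬ σ → e b ∈ 𝒜 σ) (hA : IsEMGGraded 𝒜) : IsEMGGraded ℬ := by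
  rintro f hf0 ⟨σ, hσ⟩ hfzd
  let E : B[X] ≃+* A[X] := mapEquiv e
  obtain ⟨c, g, hc, hg, hfg⟩ := hA (E f) ((map_ne_zero_iff E E.injective).2 hf0)
    ⟨σ, fun i => by simpa [E] using he σ _ (hσ i)⟩
    (by rwa [MulEquivClass.map_mem_nonZeroDivisors_iff_s16])
  refine ⟨e.symm c, E.symm g, by rwa [MulEquivClass.map_mem_nonZeroDivisors_iff_s16],
    by rwa [MulEquivClass.map_mem_nonZeroDivisors_iff_s16], E.injective ?_⟩
  rw [hfg, map_mul, E.apply_symm_apply]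
  simp [E]

lemma isEMGGraded_mvPolyGrading {G R : Type*} [CommRing R] {𝒜 : G → AddSubgroup R}
    (hEM : IsEMGGraded 𝒜) : ∀ k, IsEMGGraded (mvPolyGrading 𝒜 k)
  | 0 => hEM.of_ringEquiv_s16 (MvPolynomial.isEmptyRingEquiv R (Fin 0)) fun _ p hp => by
      rw [MvPolynomial.isEmptyRingEquiv_eq_coeff_zero]
      exact hp 0
  | k + 1 => (isEMGGraded_polyGrading (isEMGGraded_mvPolyGrading hEM k)).of_ringEquiv_s16
      (MvPolynomial.finSuccEquiv R k).toRingEquiv fun _ p hp => show ∀ i m, _ from fun i m => by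
        simpa [MvPolynomial.finSuccEquiv_coeff_coeff] using hp (m.cons i)

theorem stmt_16_general {G R : Type*} [CommRing R]
    (𝒜 : G → AddSubgroup R) (hEM : IsEMGGraded 𝒜) :
    IsEMGGraded (polyGrading 𝒜) ∧
      ∀ k : ℕ, 1 ≤ k → IsEMGGraded (mvPolyGrading 𝒜 k) :=
  ⟨isEMGGraded_polyGrading hEM, fun k _ => isEMGGraded_mvPolyGrading hEM k⟩

/-- If `R` is EM-`G`-graded, then so is `R[x]` with the grading
`(R[x])_σ = R_σ[x]`; consequently `R[x₁,…,x_k]` is EM-`G`-graded for every `k ≥ 1`. -/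
theorem stmt_16 {G R : Type*} [AddGroup G] [DecidableEq G] [CommRing R]
    (𝒜 : G → AddSubgroup R) [GradedRing 𝒜] (hEM : IsEMGGraded 𝒜) :
    IsEMGGraded (polyGrading 𝒜) ∧
      ∀ k : ℕ, 1 ≤ k → IsEMGGraded (mvPolyGrading 𝒜 k) :=
  stmt_16_general 𝒜 hEM
end

section
/- Let R be a G-graded commutative ring such that the only homogeneous zero divisor is 0 (h(R) ∩ Z(R) = {0}). Then H = R[X]/(X^2), with the induced G-grading H_σ = (R_σ[X] + (X^2))/(X^2), is an EM-G-graded ring. -/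
/-!
Write `f = f₀ + ε f₁` with `f₀, f₁ ∈ R[y]` having all coefficients in one `R_σ`. A nonzero
polynomial over `R` with coefficients in `R_σ` has a regular leading coefficient, hence is regular.
Since `R[ε][y] = R[y][ε]` and `a + bε` is regular in `A[ε]` as soon as `a` is, the zero divisor `f`
must have `f₀ = 0`, so `f = ε · f₁` with `f₁` regular and `ε` a zero divisor.
-/

open Polynomial TrivSqZeroExt nonZeroDivisors

namespace DualNumber

variable {R : Type*} [CommRing R]

noncomputable abbrev fstPoly : R[ε][X] →+* R[X] :=
  mapRingHom (fstHom R R R).toRingHom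

noncomputable def sndPoly (p : R[ε][X]) : R[X] :=
  ⟨AddMonoidAlgebra.ofCoeff (p.toFinsupp.coeff.mapRange snd snd_zero)⟩

@[simp] lemma coeff_fstPoly (p : R[ε][X]) (n : ℕ) : (fstPoly p).coeff n = (p.coeff n).fst :=
  coeff_map _ n

@[simp] lemma coeff_sndPoly (p : R[ε][X]) (n : ℕ) : (sndPoly p).coeff n = (p.coeff n).snd := by
  rcases p with ⟨q⟩
  simp [sndPoly, Polynomial.coeff]

@[simp] lemma fstPoly_map_inl (q : R[X]) : fstPoly (q.map (inlHom R R)) = q := by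
  ext n
  simp

lemma eps_mul_eq_zero_iff (x : R[ε]) : ε * x = 0 ↔ x.fst = 0 := by
  simp [TrivSqZeroExt.ext_iff]

lemma C_eps_mul_eq_zero_iff (p : R[ε][X]) : C ε * p = 0 ↔ fstPoly p = 0 := by
  simp only [Polynomial.ext_iff, coeff_C_mul, coeff_zero, eps_mul_eq_zero_iff, coeff_fstPoly]

lemma eq_C_eps_mul_of_fstPoly_eq_zero {p : R[ε][X]} (hp : fstPoly p = 0) :
    p = C ε * (sndPoly p).map (inlHom R R) := by
  ext n
  · simpa using congr_arg (coeff · n) hp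
  · simp

lemma mem_nonZeroDivisors_of_fstPoly_mem {p : R[ε][X]} (hp : fstPoly p ∈ R[X]⁰) :
    p ∈ R[ε][X]⁰ := by
  refine (mem_nonZeroDivisors_iff_right (M₀ := R[ε][X])).2 fun q hqp => ?_
  have hq : fstPoly q = 0 :=
    (mul_right_mem_nonZeroDivisors_eq_zero_iff hp).1 (by rw [← map_mul, hqp, map_zero])
  have hq' := eq_C_eps_mul_of_fstPoly_eq_zero hq
  have hq'p : fstPoly ((sndPoly q).map (inlHom R R) * p) = 0 := by
    rw [← C_eps_mul_eq_zero_iff, ← mul_assoc, ← hq', hqp]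
  have hsnd : sndPoly q = 0 := by
    rw [map_mul, fstPoly_map_inl] at hq'p
    exact (mul_right_mem_nonZeroDivisors_eq_zero_iff hp).1 hq'p
  rw [hq', hsnd, Polynomial.map_zero, mul_zero]

lemma map_inl_mem_nonZeroDivisors {q : R[X]} (hq : q ∈ R[X]⁰) :
    q.map (inlHom R R) ∈ R[ε][X]⁰ :=
  mem_nonZeroDivisors_of_fstPoly_mem (by rwa [fstPoly_map_inl])

end DualNumber

open DualNumber

lemma Polynomial.mem_nonZeroDivisors_of_coeff_mem {R : Type*} [CommRing R] {S : Set R}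
    (hS : ∀ r ∈ S, r ≠ 0 → r ∈ R⁰) {p : R[X]} (hp : p ≠ 0) (hpS : ∀ n, p.coeff n ∈ S) :
    p ∈ R[X]⁰ :=
  mem_nonZeroDivisors_of_leadingCoeff (hS _ (hpS _) (leadingCoeff_ne_zero.2 hp))

theorem stmt_17_general {G R : Type*} [CommRing R]
    (𝒜 : G → AddSubgroup R)
    (hz : ∀ r : R, (∃ σ : G, r ∈ 𝒜 σ) → r ∉ nonZeroDivisors R → r = 0) :
    ∀ f : Polynomial (DualNumber R), f ≠ 0 →
      (∃ σ : G, ∀ i, (f.coeff i).fst ∈ 𝒜 σ ∧ (f.coeff i).snd ∈ 𝒜 σ) →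
      f ∉ nonZeroDivisors (Polynomial (DualNumber R)) →
      ∃ (c : DualNumber R) (g : Polynomial (DualNumber R)),
        c ∉ nonZeroDivisors (DualNumber R) ∧
        g ∈ nonZeroDivisors (Polynomial (DualNumber R)) ∧
        f = C c * g := by
  rintro f hf ⟨σ, hσ⟩ hzd
  have hreg : ∀ r ∈ (𝒜 σ : Set R), r ≠ 0 → r ∈ R⁰ := fun r hr hr0 =>
    by_contra fun hr' => hr0 (hz r ⟨σ, hr⟩ hr')
  have hfst : fstPoly f = 0 := by
    by_contra h
    refine hzd (mem_nonZeroDivisors_of_fstPoly_mem ?_)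
    exact mem_nonZeroDivisors_of_coeff_mem hreg h fun n => by simpa using (hσ n).1
  have hf_eq := eq_C_eps_mul_of_fstPoly_eq_zero hfst
  have hsnd : sndPoly f ≠ 0 := fun h => hf <| by
    rw [hf_eq, h, Polynomial.map_zero, mul_zero]
  refine ⟨ε, _, fun hε => hf ?_, map_inl_mem_nonZeroDivisors ?_, hf_eq⟩
  · have hε0 : (ε : R[ε]) = 0 := (mul_right_mem_nonZeroDivisors_eq_zero_iff hε).1 eps_mul_eps
    rw [hf_eq, hε0, C_0, zero_mul]
  · exact mem_nonZeroDivisors_of_coeff_mem hreg hsnd fun n => by simpa using (hσ n).2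

/-- If the only homogeneous zero divisor of the `G`-graded ring `R` is `0`,
then `H = R[X]/(X²)` (realized as the dual numbers `R[ε]`, `ε² = 0`), with the induced
grading in which `a + bX` is homogeneous iff `a, b ∈ R_σ` for some `σ`, is an
EM-`G`-graded ring. -/
theorem stmt_17 {G R : Type*} [AddGroup G] [DecidableEq G] [CommRing R]
    (𝒜 : G → AddSubgroup R) [GradedRing 𝒜]
    (hz : ∀ r : R, (∃ σ : G, r ∈ 𝒜 σ) → r ∉ nonZeroDivisors R → r = 0) :
    ∀ f : Polynomial (DualNumber R), f ≠ 0 →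
      (∃ σ : G, ∀ i, (f.coeff i).fst ∈ 𝒜 σ ∧ (f.coeff i).snd ∈ 𝒜 σ) →
      f ∉ nonZeroDivisors (Polynomial (DualNumber R)) →
      ∃ (c : DualNumber R) (g : Polynomial (DualNumber R)),
        c ∉ nonZeroDivisors (DualNumber R) ∧
        g ∈ nonZeroDivisors (Polynomial (DualNumber R)) ∧
        f = C c * g :=
  stmt_17_general 𝒜 hz
end

section
/- Let R be a G-graded commutative ring such that for every homogeneous element a ∈ h(R), the annihilator Ann_R(a) is generated by an idempotent (Ann_R(a) = bR with b^2 = b). Then R is an EM-G-graded ring. -/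
open Polynomial

open scoped nonZeroDivisors

/-!
The annihilator of the coefficients of `f` is the intersection of the annihilators of the finitely
many coefficients, and a finite intersection of ideals generated by idempotents is generated by
their product `e`, again an idempotent. Then `f = (1 - e) * (f + e)`: here `1 - e` is a zero
divisor because `e ≠ 0` (otherwise `f + e = f` would be regular), and `f + e` is regular by
McCoy's theorem, since `r * (f + e) = 0` forces first `r * e = 0` (multiply by `e`) and then
`r * f = 0`, so `e ∣ r` and `r = r * e = 0`.
-/

namespace IsIdempotentElem

variable {R : Type*} [CommMonoid R] {e e' r : R}

theorem dvd_iff_mul_eq (he : IsIdempotentElem e) : e ∣ r ↔ r * e = r := by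
  refine ⟨?_, fun h => ⟨r, by rw [mul_comm, h]⟩⟩
  rintro ⟨s, rfl⟩
  rw [mul_right_comm, he.eq]

theorem mul_dvd_iff (he : IsIdempotentElem e) (he' : IsIdempotentElem e') :
    e * e' ∣ r ↔ e ∣ r ∧ e' ∣ r := by
  refine ⟨fun h => ⟨dvd_trans (dvd_mul_right e e') h, dvd_trans (dvd_mul_left e' e) h⟩, ?_⟩
  rintro ⟨h, h'⟩
  rw [(he.mul he').dvd_iff_mul_eq, ← mul_assoc, he.dvd_iff_mul_eq.mp h, he'.dvd_iff_mul_eq.mp h']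

variable {ι : Type*} {s : Finset ι} {b : ι → R}

theorem finset_prod (hb : ∀ i ∈ s, IsIdempotentElem (b i)) :
    IsIdempotentElem (∏ i ∈ s, b i) := by
  classical
  induction s using Finset.induction_on with
  | empty => exact one
  | insert j s hj ih =>
    rw [Finset.prod_insert hj]
    exact (hb j (s.mem_insert_self j)).mul (ih fun i hi => hb i (Finset.mem_insert_of_mem hi))

theorem finset_prod_dvd_iff (hb : ∀ i ∈ s, IsIdempotentElem (b i)) :
    ∏ i ∈ s, b i ∣ r ↔ ∀ i ∈ s, b i ∣ r := by
  classical
  induction s using Finset.induction_on with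
  | empty => simp
  | insert j s hj ih =>
    have hs : ∀ i ∈ s, IsIdempotentElem (b i) := fun i hi => hb i (Finset.mem_insert_of_mem hi)
    rw [Finset.prod_insert hj, (hb j (s.mem_insert_self j)).mul_dvd_iff (finset_prod hs),
      ih hs, Finset.forall_mem_insert]

end IsIdempotentElem

namespace Polynomial

theorem smul_eq_zero_iff_forall_mem_support {R : Type*} [Semiring R] {r : R} {f : R[X]} :
    r • f = 0 ↔ ∀ i ∈ f.support, r * f.coeff i = 0 := by
  refine ⟨fun h i _ => by simpa using congr(coeff $h i), fun h => ext fun i => ?_⟩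
  by_cases hi : i ∈ f.support
  · simpa using h i hi
  · simp [notMem_support_iff.mp hi]

variable {R : Type*} [CommRing R]

theorem exists_isIdempotentElem_smul_eq_zero_iff {f : R[X]}
    (hcoeff : ∀ i, ∃ b, IsIdempotentElem b ∧ ∀ r, r * f.coeff i = 0 ↔ b ∣ r) :
    ∃ e : R, IsIdempotentElem e ∧ ∀ r : R, r • f = 0 ↔ e ∣ r := by
  choose b hb hann using hcoeff
  have hb' : ∀ i ∈ f.support, IsIdempotentElem (b i) := fun i _ => hb i
  refine ⟨_, IsIdempotentElem.finset_prod hb', fun r => ?_⟩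
  rw [IsIdempotentElem.finset_prod_dvd_iff hb', smul_eq_zero_iff_forall_mem_support]
  exact forall₂_congr fun i _ => hann i r

variable {e : R} {f : R[X]}

theorem add_C_mem_nonZeroDivisors (he : IsIdempotentElem e) (hf : ∀ r : R, r • f = 0 ↔ e ∣ r) :
    f + C e ∈ R[X]⁰ := by
  have hef : e • f = 0 := (hf e).mpr dvd_rfl
  refine Polynomial.mem_nonZeroDivisors_iff.mpr fun r hr => ?_
  have hre : r * e = 0 := by
    have : e • r • (f + C e) = C (r * e) := by
      rw [smul_comm, smul_add, hef, zero_add, smul_C, smul_eq_mul, he.eq, smul_C, smul_eq_mul]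
    rwa [hr, smul_zero, eq_comm, C_eq_zero] at this
  have hrf : r • f = 0 := by
    rwa [smul_add, smul_C, smul_eq_mul, hre, C_0, add_zero] at hr
  rw [← he.dvd_iff_mul_eq.mp ((hf r).mp hrf), hre]

theorem eq_C_one_sub_mul_add_C (he : IsIdempotentElem e) (hef : e • f = 0) :
    f = C (1 - e) * (f + C e) := by
  rw [map_sub, map_one, sub_mul, one_mul, mul_add, ← smul_eq_C_mul, hef, zero_add, ← map_mul,
    he.eq, add_sub_cancel_right]

theorem one_sub_notMem_nonZeroDivisors (he : IsIdempotentElem e) (hf : ∀ r : R, r • f = 0 ↔ e ∣ r)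
    (hfz : f ∉ R[X]⁰) : 1 - e ∉ R⁰ := by
  have he0 : e ≠ 0 := by
    rintro rfl
    exact hfz (by simpa using add_C_mem_nonZeroDivisors he hf)
  exact fun h => he0 ((mul_left_mem_nonZeroDivisors_eq_zero_iff h).mp he.one_sub_mul_self)

end Polynomial

theorem stmt_18_general {G R : Type*} [CommRing R]
    (𝒜 : G → AddSubgroup R)
    (hid : ∀ a : R, (∃ σ : G, a ∈ 𝒜 σ) →
      ∃ b : R, b * b = b ∧ ∀ r : R, r * a = 0 ↔ r ∈ Ideal.span {b}) :
    IsEMGGraded 𝒜 := by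
  rintro f - ⟨σ, hσ⟩ hfz
  obtain ⟨e, he, hf⟩ := exists_isIdempotentElem_smul_eq_zero_iff fun i => by
    obtain ⟨b, hb, hann⟩ := hid (f.coeff i) ⟨σ, hσ i⟩
    exact ⟨b, hb, fun r => (hann r).trans Ideal.mem_span_singleton⟩
  exact ⟨1 - e, f + C e, one_sub_notMem_nonZeroDivisors he hf hfz,
    add_C_mem_nonZeroDivisors he hf, eq_C_one_sub_mul_add_C he ((hf e).mpr dvd_rfl)⟩

/-- If for every homogeneous `a ∈ h(R)` the annihilator of `a` is generated
by an idempotent, then `R` is an EM-`G`-graded ring. -/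
theorem stmt_18 {G R : Type*} [AddGroup G] [DecidableEq G] [CommRing R]
    (𝒜 : G → AddSubgroup R) [GradedRing 𝒜]
    (hid : ∀ a : R, (∃ σ : G, a ∈ 𝒜 σ) →
      ∃ b : R, b * b = b ∧ ∀ r : R, r * a = 0 ↔ r ∈ Ideal.span {b}) :
    IsEMGGraded 𝒜 :=
  stmt_18_general 𝒜 hid
end
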